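/- arXiv:1211.3349 — 2 statements merged into one kernel-verified Lean document; each statement's English description precedes it below -/
import Mathlib

section
/- Let F be a field, n ≥ 1, and μ a partition of n. The Demazure operators preserve the Tanisaki ideal I_μ ⊆ F[x_1,…,x_n] (that is, π̄_i(I_μ) ⊆ I_μ for all 1 ≤ i ≤ n−1, equivalently π_i(I_μ) ⊆ I_μ for all i) if and only if μ is a hook. (Proposition 8.1.) -/
open MvPolynomial

/-- The simple transposition `s_i = (i, i+1)` (0-based); identity if out of range. -/
def sw (n : ℕ) (i : ℕ) : Equiv.Perm (Fin n) :=
  if h : i + 1 < n then Equiv.swap ⟨i, Nat.lt_of_succ_lt h⟩ ⟨i + 1, h⟩ else 1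

/-- `d_k(μ) = μ′_1 + ⋯ + μ′_k`, where `μ′` is the conjugate partition of `μ`, written with
`n` parts `μ′_1 ≤ ⋯ ≤ μ′_n` (allowing zeros), so that `μ′_j = #{parts of μ ≥ n+1-j}`. -/
def dk (n : ℕ) (μ : n.Partition) (k : ℕ) : ℕ :=
  ∑ i ∈ Finset.Icc (n + 1 - k) n, (μ.parts.filter fun p => i ≤ p).card

/-- The elementary symmetric polynomial `e_r(S)` in the set `S` of variables. -/
noncomputable def esymmS (F : Type*) [Field F] {n : ℕ} (S : Finset (Fin n)) (r : ℕ) :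
    MvPolynomial (Fin n) F :=
  ∑ T ∈ S.powersetCard r, ∏ x ∈ T, X x

/-- The Tanisaki ideal `I_μ`, generated by the `e_r(S)` with `|S| = k` and
`k ≥ r > k - d_k(μ)`. -/
noncomputable def tanisaki (n : ℕ) (F : Type*) [Field F] (μ : n.Partition) :
    Ideal (MvPolynomial (Fin n) F) :=
  Ideal.span {f : MvPolynomial (Fin n) F | ∃ (k r : ℕ) (S : Finset (Fin n)),
    S.card = k ∧ r ≤ k ∧ k - dk n μ k < r ∧ f = esymmS F S r}

/-- A partition is a hook if at most one part exceeds `1`. -/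
def IsHook {n : ℕ} (μ : n.Partition) : Prop :=
  (μ.parts.filter fun p => 2 ≤ p).card ≤ 1

namespace Stmt16

open Finset

variable {n : ℕ} {F : Type*} [Field F]

/-! ### esymmS basics -/

lemma esymmS_zero (S : Finset (Fin n)) : esymmS F S 0 = 1 := by
  simp [esymmS]

lemma esymmS_of_card_lt {S : Finset (Fin n)} {r : ℕ} (h : S.card < r) : esymmS F S r = 0 := by
  simp [esymmS, Finset.powersetCard_eq_empty.2 h]

lemma esymmS_insert {x : Fin n} {S₀ : Finset (Fin n)} (hx : x ∉ S₀) (r : ℕ) :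
    esymmS F (insert x S₀) (r+1) = X x * esymmS F S₀ r + esymmS F S₀ (r+1) := by
  unfold esymmS
  rw [Finset.powersetCard_succ_insert hx, Finset.sum_union, Finset.sum_image, Finset.mul_sum]
  · rw [add_comm]
    congr 1
    refine Finset.sum_congr rfl fun T hT => ?_
    rw [mem_powersetCard] at hT
    exact Finset.prod_insert (fun hxT => hx (hT.1 hxT))
  · intro T hT T' hT' hins
    rw [Finset.mem_coe, mem_powersetCard] at hT hT'
    have h1 : T = (insert x T).erase x := by
      rw [Finset.erase_insert (fun hxT => hx (hT.1 hxT))]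
    rw [h1, hins, Finset.erase_insert (fun hxT => hx (hT'.1 hxT))]
  · rw [Finset.disjoint_left]
    intro T hT hT2
    rw [mem_powersetCard] at hT
    rw [Finset.mem_image] at hT2
    obtain ⟨T₀, hT₀, rfl⟩ := hT2
    exact hx (hT.1 (Finset.mem_insert_self _ _))

lemma rename_esymmS (σ : Equiv.Perm (Fin n)) (S : Finset (Fin n)) (r : ℕ) :
    rename σ (esymmS F S r) = esymmS F (S.image σ) r := by
  unfold esymmS
  rw [map_sum]
  refine Finset.sum_bij (fun T _ => T.image σ) ?_ ?_ ?_ ?_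
  · intro T hT
    rw [mem_powersetCard] at hT ⊢
    exact ⟨Finset.image_subset_image hT.1, by rw [Finset.card_image_of_injective _ σ.injective, hT.2]⟩
  · intro T hT T' hT' h
    exact Finset.image_injective σ.injective h
  · intro T' hT'
    rw [mem_powersetCard] at hT'
    refine ⟨T'.image σ.symm, ?_, ?_⟩
    · rw [mem_powersetCard]
      constructor
      · intro x hx
        rw [Finset.mem_image] at hx
        obtain ⟨y, hy, rfl⟩ := hx
        have := hT'.1 hy
        rw [Finset.mem_image] at this
        obtain ⟨s, hs, rfl⟩ := this
        simpa using hs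
      · rw [Finset.card_image_of_injective _ σ.symm.injective, hT'.2]
    · show Finset.image _ _ = T'
      rw [Finset.image_image]
      simp
  · intro T hT
    rw [map_prod]
    rw [Finset.prod_image (fun x _ y _ h => σ.injective h)]
    simp

lemma image_swap_both {a b : Fin n} {S : Finset (Fin n)} (ha : a ∈ S) (hb : b ∈ S) :
    S.image (Equiv.swap a b) = S := by
  apply Finset.eq_of_subset_of_card_le
  · intro z hz
    rw [Finset.mem_image] at hz
    obtain ⟨x, hx, rfl⟩ := hz
    rcases eq_or_ne x a with rfl | hxa
    · rwa [Equiv.swap_apply_left]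
    rcases eq_or_ne x b with rfl | hxb
    · rwa [Equiv.swap_apply_right]
    · rwa [Equiv.swap_apply_of_ne_of_ne hxa hxb]
  · rw [Finset.card_image_of_injective _ (Equiv.swap a b).injective]

lemma image_swap_neither {a b : Fin n} {S : Finset (Fin n)} (ha : a ∉ S) (hb : b ∉ S) :
    S.image (Equiv.swap a b) = S := by
  rw [Finset.image_congr (g := id), Finset.image_id]
  intro x hx
  exact Equiv.swap_apply_of_ne_of_ne (fun h => ha (h ▸ hx)) (fun h => hb (h ▸ hx))

lemma image_swap_left {a b : Fin n} {S : Finset (Fin n)} (ha : a ∈ S) (hb : b ∉ S) :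
    S.image (Equiv.swap a b) = insert b (S.erase a) := by
  ext z
  rw [Finset.mem_image, Finset.mem_insert, Finset.mem_erase]
  constructor
  · rintro ⟨x, hx, rfl⟩
    rcases eq_or_ne x a with rfl | hxa
    · left; rw [Equiv.swap_apply_left]
    rcases eq_or_ne x b with rfl | hxb
    · exact absurd hx hb
    · rw [Equiv.swap_apply_of_ne_of_ne hxa hxb]
      exact Or.inr ⟨hxa, hx⟩
  · rintro (rfl | ⟨hza, hz⟩)
    · exact ⟨a, ha, Equiv.swap_apply_left _ _⟩
    · exact ⟨z, hz, Equiv.swap_apply_of_ne_of_ne hza (fun h => hb (h ▸ hz))⟩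

/-! ### Partition combinatorics -/

/-- `colc μ j` = number of parts of `μ` that are `≥ j` (the `j`-th column height). -/
def colc {n : ℕ} (μ : n.Partition) (j : ℕ) : ℕ := (μ.parts.filter fun p => j ≤ p).card

lemma colc_anti (μ : n.Partition) {i j : ℕ} (h : i ≤ j) : colc μ j ≤ colc μ i := by
  unfold colc
  exact Multiset.card_le_card (Multiset.monotone_filter_right _ (fun p hp => le_trans h hp))

lemma dk_eq_sum_colc (μ : n.Partition) (k : ℕ) :
    dk n μ k = ∑ i ∈ Finset.Icc (n + 1 - k) n, colc μ i := rfl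

lemma Icc_bot_split {j : ℕ} (hj : 1 ≤ j) (hjn : j ≤ n) :
    Finset.Icc j n = insert j (Finset.Icc (j+1) n) := by
  ext i
  simp only [Finset.mem_Icc, Finset.mem_insert]
  omega

lemma dk_succ (μ : n.Partition) {k : ℕ} (hk1 : 1 ≤ k) (hk : k ≤ n) :
    dk n μ k = colc μ (n + 1 - k) + dk n μ (k - 1) := by
  rw [dk_eq_sum_colc, dk_eq_sum_colc, Icc_bot_split (j := n + 1 - k) (by omega) (by omega),
    Finset.sum_insert (by simp only [Finset.mem_Icc]; omega)]
  have : Finset.Icc (n + 1 - k + 1) n = Finset.Icc (n + 1 - (k-1)) n := by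
    ext i
    simp only [Finset.mem_Icc]
    omega
  rw [this]

lemma hook_colc {μ : n.Partition} (h : IsHook μ) {j : ℕ} (hj : 2 ≤ j) : colc μ j ≤ 1 :=
  le_trans (colc_anti μ hj) h

/-- key inequality for the backward direction -/
lemma dk_pred_ge {μ : n.Partition} (h : IsHook μ) {k : ℕ} (hk1 : 1 ≤ k) (hk : k ≤ n - 1) :
    k - dk n μ k ≥ (k - 1) - dk n μ (k - 1) := by
  have h1 : dk n μ k ≤ colc μ (n + 1 - k) + dk n μ (k-1) := le_of_eq (dk_succ μ hk1 (by omega))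
  have h2 : colc μ (n + 1 - k) ≤ 1 := hook_colc h (by omega)
  -- also need dk (k-1) ≤ k - 1
  have h3 : dk n μ (k-1) ≤ dk n μ k := by
    rw [dk_succ μ hk1 (by omega)]
    omega
  omega

lemma parts_le (μ : n.Partition) {p : ℕ} (hp : p ∈ μ.parts) : p ≤ n := by
  have := μ.parts_sum
  calc p ≤ μ.parts.sum := Multiset.single_le_sum (fun x hx => Nat.zero_le x) _ hp
  _ = n := μ.parts_sum

lemma sum_colc (μ : n.Partition) : ∑ i ∈ Finset.Icc 1 n, colc μ i = n := by
  unfold colc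
  have key : ∀ M : Multiset ℕ, (∀ p ∈ M, p ≤ n) →
      ∑ i ∈ Finset.Icc 1 n, (M.filter fun p => i ≤ p).card = M.sum := by
    intro M
    induction M using Multiset.induction with
    | empty => simp
    | cons p M ih =>
      intro hM
      have hp : p ≤ n := hM p (Multiset.mem_cons_self _ _)
      have hM' : ∀ q ∈ M, q ≤ n := fun q hq => hM q (Multiset.mem_cons_of_mem hq)
      simp only [Multiset.filter_cons, Multiset.card_add, Multiset.sum_cons]
      rw [Finset.sum_add_distrib, ih hM']
      congr 1
      have : ∀ i : ℕ, (if i ≤ p then ({p} : Multiset ℕ) else 0).card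
          = if i ≤ p then 1 else 0 := by
        intro i; split <;> simp
      simp only [this]
      rw [Finset.sum_boole]
      have : Finset.filter (fun i => i ≤ p) (Finset.Icc 1 n) = Finset.Icc 1 p := by
        ext i
        simp only [Finset.mem_filter, Finset.mem_Icc]
        omega
      rw [this]
      simp [Nat.card_Icc]
  rw [key μ.parts (fun p hp => parts_le μ hp), μ.parts_sum]

lemma colc_zero_parts (μ : n.Partition) (hn : 1 ≤ n) : 1 ≤ colc μ 1 := by
  unfold colc
  have hne : μ.parts ≠ 0 := by
    intro h
    have := μ.parts_sum
    rw [h] at this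
    simp at this
    omega
  have : ∃ p, p ∈ μ.parts := Multiset.exists_mem_of_ne_zero hne
  obtain ⟨p, hp⟩ := this
  have h1 : 1 ≤ p := μ.parts_pos hp
  have : p ∈ μ.parts.filter (fun q => 1 ≤ q) := Multiset.mem_filter.2 ⟨hp, h1⟩
  exact Multiset.card_pos_iff_exists_mem.2 ⟨p, this⟩

/-! ### Demazure operator basics -/

section Dem

variable (dem : ℕ → MvPolynomial (Fin n) F → MvPolynomial (Fin n) F)
variable (hdem : ∀ (i : ℕ) (hi : i + 1 < n) (f : MvPolynomial (Fin n) F),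
      (X (⟨i, Nat.lt_of_succ_lt hi⟩ : Fin n) - X ⟨i + 1, hi⟩) * dem i f
        = X (⟨i, Nat.lt_of_succ_lt hi⟩ : Fin n) * f - X ⟨i + 1, hi⟩ * rename (sw n i) f)
variable {i : ℕ} (hi : i + 1 < n)

lemma X_sub_X_ne : (X (⟨i, Nat.lt_of_succ_lt hi⟩ : Fin n) - X (⟨i + 1, hi⟩ : Fin n) :
    MvPolynomial (Fin n) F) ≠ 0 := by
  apply sub_ne_zero_of_ne
  intro h
  have := MvPolynomial.X_injective (R := F) h
  have : i = i + 1 := congrArg Fin.val this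
  omega

include hdem hi in
lemma dem_unique {f g : MvPolynomial (Fin n) F}
    (h : (X (⟨i, Nat.lt_of_succ_lt hi⟩ : Fin n) - X ⟨i + 1, hi⟩) * g
      = X (⟨i, Nat.lt_of_succ_lt hi⟩ : Fin n) * f - X ⟨i + 1, hi⟩ * rename (sw n i) f) :
    dem i f = g :=
  mul_left_cancel₀ (X_sub_X_ne hi) ((hdem i hi f).trans h.symm)

include hdem hi in
lemma dem_zero : dem i 0 = 0 := by
  apply dem_unique dem hdem hi
  simp

include hdem hi in
lemma dem_add (f g : MvPolynomial (Fin n) F) : dem i (f + g) = dem i f + dem i g := by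
  apply dem_unique dem hdem hi
  rw [map_add]
  have h1 := hdem i hi f
  have h2 := hdem i hi g
  ring_nf
  ring_nf at h1 h2
  linear_combination h1 + h2

include hdem hi in
lemma dem_mul (q f : MvPolynomial (Fin n) F) :
    dem i (q * f) = dem i q * f + rename (sw n i) q * (dem i f - f) := by
  apply dem_unique dem hdem hi
  rw [map_mul]
  have h1 := hdem i hi f
  have h2 := hdem i hi q
  ring_nf
  ring_nf at h1 h2
  linear_combination f * h2 + (rename (sw n i) q) * h1

lemma sw_eq : sw n i = Equiv.swap (⟨i, Nat.lt_of_succ_lt hi⟩ : Fin n) ⟨i + 1, hi⟩ :=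
  dif_pos hi

include hdem hi in
lemma dem_esymm_inv {S : Finset (Fin n)} {r : ℕ}
    (h : S.image (Equiv.swap (⟨i, Nat.lt_of_succ_lt hi⟩ : Fin n) ⟨i + 1, hi⟩) = S) :
    dem i (esymmS F S r) = esymmS F S r := by
  apply dem_unique dem hdem hi
  rw [sw_eq hi, rename_esymmS, h]
  ring

include hdem hi in
lemma dem_esymm_a {S : Finset (Fin n)} {r : ℕ}
    (ha : (⟨i, Nat.lt_of_succ_lt hi⟩ : Fin n) ∈ S) (hb : (⟨i + 1, hi⟩ : Fin n) ∉ S) :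
    dem i (esymmS F S (r+1)) - esymmS F S (r+1)
      = esymmS F (insert ⟨i + 1, hi⟩ (S.erase ⟨i, Nat.lt_of_succ_lt hi⟩)) (r+1)
        - esymmS F (S.erase ⟨i, Nat.lt_of_succ_lt hi⟩) (r+1) := by
  set a : Fin n := ⟨i, Nat.lt_of_succ_lt hi⟩
  set b : Fin n := ⟨i + 1, hi⟩
  set S₀ := S.erase a with hS₀
  have haS₀ : a ∉ S₀ := Finset.notMem_erase _ _
  have hbS₀ : b ∉ S₀ := fun h => hb (Finset.erase_subset _ _ h)
  have hS : insert a S₀ = S := Finset.insert_erase ha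
  have hf : esymmS F S (r+1) = X a * esymmS F S₀ r + esymmS F S₀ (r+1) := by
    rw [← hS, esymmS_insert haS₀]
  have hg : esymmS F (insert b S₀) (r+1) = X b * esymmS F S₀ r + esymmS F S₀ (r+1) :=
    esymmS_insert hbS₀ r
  have hdemval : dem i (esymmS F S (r+1))
      = (X a + X b) * esymmS F S₀ r + esymmS F S₀ (r+1) := by
    apply dem_unique dem hdem hi
    rw [sw_eq hi, rename_esymmS, image_swap_left ha hb, ← hS₀, hg, hf]
    ring
  rw [hdemval, hf, hg]
  ring

include hdem hi in
lemma dem_esymm_b {S : Finset (Fin n)} {r : ℕ}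
    (ha : (⟨i, Nat.lt_of_succ_lt hi⟩ : Fin n) ∉ S) (hb : (⟨i + 1, hi⟩ : Fin n) ∈ S) (hr : 1 ≤ r) :
    dem i (esymmS F S r) = esymmS F (S.erase ⟨i + 1, hi⟩) r := by
  set a : Fin n := ⟨i, Nat.lt_of_succ_lt hi⟩
  set b : Fin n := ⟨i + 1, hi⟩
  obtain ⟨r, rfl⟩ : ∃ r', r = r' + 1 := ⟨r - 1, by omega⟩
  set S₀ := S.erase b with hS₀
  have haS₀ : a ∉ S₀ := fun h => ha (Finset.erase_subset _ _ h)
  have hbS₀ : b ∉ S₀ := Finset.notMem_erase _ _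
  have hS : insert b S₀ = S := Finset.insert_erase hb
  have hf : esymmS F S (r+1) = X b * esymmS F S₀ r + esymmS F S₀ (r+1) := by
    rw [← hS, esymmS_insert hbS₀]
  have hg : esymmS F (insert a S₀) (r+1) = X a * esymmS F S₀ r + esymmS F S₀ (r+1) :=
    esymmS_insert haS₀ r
  apply dem_unique dem hdem hi
  rw [sw_eq hi]
  have himg : S.image (Equiv.swap a b) = insert a S₀ := by
    rw [Equiv.swap_comm]
    exact image_swap_left hb ha
  rw [rename_esymmS, himg, hf, hg]
  ring

end Dem

/-! ### Backward direction: hook implies preservation -/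

lemma gen_mem (μ : n.Partition) {S : Finset (Fin n)} {k r : ℕ} (hcard : S.card = k)
    (hrk : r ≤ k) (hdk : k - dk n μ k < r) : esymmS F S r ∈ tanisaki n F μ :=
  Ideal.subset_span ⟨k, r, S, hcard, hrk, hdk, rfl⟩

lemma card_le_of_not_mem {S : Finset (Fin n)} {b : Fin n} (hb : b ∉ S) : S.card ≤ n - 1 := by
  have h1 : S ⊆ Finset.univ.erase b := fun x hx =>
    Finset.mem_erase.2 ⟨fun h => hb (h ▸ hx), Finset.mem_univ x⟩
  have := Finset.card_le_card h1
  rwa [Finset.card_erase_of_mem (Finset.mem_univ b), Finset.card_univ, Fintype.card_fin] at this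

section Backward

variable (dem : ℕ → MvPolynomial (Fin n) F → MvPolynomial (Fin n) F)
variable (hdem : ∀ (i : ℕ) (hi : i + 1 < n) (f : MvPolynomial (Fin n) F),
      (X (⟨i, Nat.lt_of_succ_lt hi⟩ : Fin n) - X ⟨i + 1, hi⟩) * dem i f
        = X (⟨i, Nat.lt_of_succ_lt hi⟩ : Fin n) * f - X ⟨i + 1, hi⟩ * rename (sw n i) f)
variable {i : ℕ} (hi : i + 1 < n)

include hdem hi in
lemma dem_gen_sub_mem {μ : n.Partition} (hμ : IsHook μ) {S : Finset (Fin n)} {k r : ℕ}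
    (hcard : S.card = k) (hrk : r ≤ k) (hdk : k - dk n μ k < r) :
    dem i (esymmS F S r) - esymmS F S r ∈ tanisaki n F μ := by
  set a : Fin n := ⟨i, Nat.lt_of_succ_lt hi⟩
  set b : Fin n := ⟨i + 1, hi⟩
  have hr1 : 1 ≤ r := by omega
  by_cases ha : a ∈ S <;> by_cases hb : b ∈ S
  · rw [dem_esymm_inv dem hdem hi (image_swap_both ha hb), sub_self]
    exact (tanisaki n F μ).zero_mem
  · -- a ∈ S, b ∉ S
    obtain ⟨r', rfl⟩ : ∃ r', r = r' + 1 := ⟨r - 1, by omega⟩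
    rw [dem_esymm_a dem hdem hi ha hb]
    have hk1 : 1 ≤ k := by
      rw [← hcard]
      exact Finset.card_pos.2 ⟨a, ha⟩
    have hkn : k ≤ n - 1 := hcard ▸ card_le_of_not_mem hb
    have hcard1 : (insert b (S.erase a)).card = k := by
      rw [Finset.card_insert_of_notMem (fun h => hb (Finset.erase_subset _ _ h)),
        Finset.card_erase_of_mem ha, hcard]
      omega
    have hmem1 : esymmS F (insert b (S.erase a)) (r' + 1) ∈ tanisaki n F μ :=
      gen_mem μ hcard1 hrk hdk
    have hcard2 : (S.erase a).card = k - 1 := by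
      rw [Finset.card_erase_of_mem ha, hcard]
    rcases eq_or_lt_of_le hrk with rfl | hrk'
    · rw [show esymmS F (S.erase a) (r' + 1) = 0 from esymmS_of_card_lt (by omega)]
      simpa using hmem1
    · refine Ideal.sub_mem _ hmem1 (gen_mem μ hcard2 (by omega) ?_)
      have := dk_pred_ge hμ hk1 hkn
      omega
  · -- a ∉ S, b ∈ S
    rw [dem_esymm_b dem hdem hi ha hb hr1]
    have hk1 : 1 ≤ k := by
      rw [← hcard]
      exact Finset.card_pos.2 ⟨b, hb⟩
    have hkn : k ≤ n - 1 := hcard ▸ card_le_of_not_mem ha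
    have hmemf : esymmS F S r ∈ tanisaki n F μ := gen_mem μ hcard hrk hdk
    have hcard2 : (S.erase b).card = k - 1 := by
      rw [Finset.card_erase_of_mem hb, hcard]
    rcases eq_or_lt_of_le hrk with rfl | hrk'
    · rw [show esymmS F (S.erase b) r = 0 from esymmS_of_card_lt (by omega), zero_sub]
      exact neg_mem hmemf
    · refine Ideal.sub_mem _ (gen_mem μ hcard2 (by omega) ?_) hmemf
      have := dk_pred_ge hμ hk1 hkn
      omega
  · rw [dem_esymm_inv dem hdem hi (image_swap_neither ha hb), sub_self]
    exact (tanisaki n F μ).zero_mem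

include hdem hi in
lemma dem_sub_mem {μ : n.Partition} (hμ : IsHook μ) {f : MvPolynomial (Fin n) F}
    (hf : f ∈ tanisaki n F μ) : dem i f - f ∈ tanisaki n F μ := by
  refine Submodule.span_induction (p := fun x _ => dem i x - x ∈ tanisaki n F μ)
    ?_ ?_ ?_ ?_ hf
  · rintro x ⟨k, r, S, hcard, hrk, hdk, rfl⟩
    show dem i (esymmS F S r) - esymmS F S r ∈ tanisaki n F μ
    exact dem_gen_sub_mem dem hdem hi hμ hcard hrk hdk
  · show dem i 0 - 0 ∈ tanisaki n F μ
    rw [dem_zero dem hdem hi, sub_zero]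
    exact (tanisaki n F μ).zero_mem
  · intro x y hx hy hpx hpy
    show dem i (x + y) - (x + y) ∈ tanisaki n F μ
    have : dem i (x + y) - (x + y) = (dem i x - x) + (dem i y - y) := by
      rw [dem_add dem hdem hi]
      ring
    rw [this]
    exact Ideal.add_mem _ hpx hpy
  · intro q x hx hpx
    have hxI : x ∈ tanisaki n F μ := hx
    have : dem i (q * x) - q * x = (dem i q - q) * x + rename (sw n i) q * (dem i x - x) := by
      rw [dem_mul dem hdem hi]
      ring
    show dem i (q • x) - q • x ∈ tanisaki n F μ
    rw [smul_eq_mul, this]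
    exact Ideal.add_mem _ (Ideal.mul_mem_left _ _ hxI) (Ideal.mul_mem_left _ _ hpx)

end Backward

/-! ### Indicator exponents and pairing -/

noncomputable def indi (T : Finset (Fin n)) : Fin n →₀ ℕ := ∑ x ∈ T, Finsupp.single x 1

lemma indi_apply (T : Finset (Fin n)) (y : Fin n) : indi T y = if y ∈ T then 1 else 0 := by
  unfold indi
  rw [Finset.sum_apply']
  simp only [Finsupp.single_apply]
  rw [Finset.sum_ite_eq' T y (fun _ => 1)]

lemma indi_insert {x : Fin n} {T : Finset (Fin n)} (hx : x ∉ T) :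
    indi (insert x T) = Finsupp.single x 1 + indi T := by
  unfold indi
  rw [Finset.sum_insert hx]

lemma prod_X_eq (T : Finset (Fin n)) :
    (∏ x ∈ T, (X x : MvPolynomial (Fin n) F)) = monomial (indi T) 1 := by
  induction T using Finset.induction with
  | empty => simp [indi]
  | insert x s hx ih =>
    rw [Finset.prod_insert hx, ih, indi_insert hx, X, monomial_mul, one_mul]

noncomputable def pairing (f h : MvPolynomial (Fin n) F) : F :=
  ∑ d ∈ h.support, coeff d f * coeff d h

lemma pairing_monomial (d : Fin n →₀ ℕ) (A : F) (h : MvPolynomial (Fin n) F) :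
    pairing (monomial d A) h = A * coeff d h := by
  unfold pairing
  rw [Finset.sum_eq_single d]
  · rw [coeff_monomial, if_pos rfl]
  · intro e _ hne
    rw [coeff_monomial, if_neg (fun hd : d = e => hne hd.symm), zero_mul]
  · intro hd
    rw [notMem_support_iff.1 hd, mul_zero]

lemma pairing_sum_left {α : Type*} (s : Finset α) (f : α → MvPolynomial (Fin n) F)
    (h : MvPolynomial (Fin n) F) :
    pairing (∑ a ∈ s, f a) h = ∑ a ∈ s, pairing (f a) h := by
  unfold pairing
  rw [Finset.sum_comm]
  refine Finset.sum_congr rfl fun d _ => ?_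
  rw [coeff_sum, Finset.sum_mul]

lemma pairing_add_left (f g h : MvPolynomial (Fin n) F) :
    pairing (f + g) h = pairing f h + pairing g h := by
  unfold pairing
  simp only [coeff_add, add_mul]
  rw [Finset.sum_add_distrib]

lemma pairing_zero_left (h : MvPolynomial (Fin n) F) : pairing 0 h = 0 := by
  simp [pairing]

/-! ### The blocks -/

def wgt (μ : n.Partition) (j : ℕ) : ℕ := colc μ (Equiv.swap 1 2 (j + 1))

lemma wgt_zero (μ : n.Partition) : wgt μ 0 = colc μ 2 := by
  unfold wgt
  rw [show ((0:ℕ) + 1) = 1 from rfl, Equiv.swap_apply_left]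

lemma wgt_one (μ : n.Partition) : wgt μ 1 = colc μ 1 := by
  unfold wgt
  rw [show ((1:ℕ) + 1) = 2 from rfl, Equiv.swap_apply_right]

def off (μ : n.Partition) (j : ℕ) : ℕ := ∑ i ∈ Finset.range j, wgt μ i

lemma off_succ (μ : n.Partition) (j : ℕ) : off μ (j+1) = off μ j + wgt μ j :=
  Finset.sum_range_succ _ _

lemma off_mono (μ : n.Partition) : Monotone (off μ) := by
  intro i j hij
  exact Finset.sum_le_sum_of_subset (Finset.range_subset_range.2 hij)

lemma off_one (μ : n.Partition) : off μ 1 = colc μ 2 := by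
  rw [show (1:ℕ) = 0 + 1 from rfl, off_succ, wgt_zero]
  simp [off]

lemma off_two (μ : n.Partition) : off μ 2 = colc μ 2 + colc μ 1 := by
  rw [show (2:ℕ) = 1 + 1 from rfl, off_succ, wgt_one, off_one]

lemma swap12_eq (i : ℕ) : Equiv.swap 1 2 i = if i = 1 then 2 else if i = 2 then 1 else i := by
  rw [Equiv.swap_apply_def]

lemma off_n (μ : n.Partition) (hn2 : 2 ≤ n) : off μ n = n := by
  unfold off wgt
  have h1 : ∑ i ∈ Finset.range n, colc μ (Equiv.swap 1 2 (i+1))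
      = ∑ i ∈ Finset.Icc 1 n, colc μ (Equiv.swap 1 2 i) := by
    rw [← Finset.Ico_add_one_right_eq_Icc, Finset.sum_Ico_eq_sum_range]
    refine Finset.sum_congr (by rw [Nat.add_sub_cancel]) fun i _ => by rw [Nat.add_comm 1 i]
  rw [h1]
  have h2 : ∑ i ∈ Finset.Icc 1 n, colc μ (Equiv.swap 1 2 i) = ∑ i ∈ Finset.Icc 1 n, colc μ i := by
    apply Finset.sum_equiv (Equiv.swap 1 2)
    · intro i
      simp only [Finset.mem_Icc, swap12_eq]
      split_ifs <;> omega
    · intro i _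
      rfl
  rw [h2, sum_colc]

lemma colc_le_n (μ : n.Partition) : colc μ 1 ≤ n := by
  have h1 : colc μ 1 = μ.parts.card := by
    unfold colc
    congr 1
    rw [Multiset.filter_eq_self]
    exact fun p hp => μ.parts_pos hp
  have h2 : μ.parts.card ≤ μ.parts.sum := by
    have := Multiset.card_nsmul_le_sum (s := μ.parts) (fun p hp => μ.parts_pos hp)
    simpa using this
  rw [h1]
  calc μ.parts.card ≤ μ.parts.sum := h2
  _ = n := μ.parts_sum

def KK (μ : n.Partition) (j : ℕ) : Finset (Fin n) :=
  Finset.univ.filter (fun x => off μ j ≤ x.val ∧ x.val < off μ (j+1))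

lemma mem_KK {μ : n.Partition} {j : ℕ} {x : Fin n} :
    x ∈ KK μ j ↔ off μ j ≤ x.val ∧ x.val < off μ (j+1) := by
  simp [KK]

lemma KK_disjoint {μ : n.Partition} {i j : ℕ} (hij : i ≠ j) {x : Fin n}
    (hx : x ∈ KK μ i) (hy : x ∈ KK μ j) : False := by
  rw [mem_KK] at hx hy
  rcases Nat.lt_or_ge i j with h | h
  · have := off_mono μ (show i + 1 ≤ j from h)
    omega
  · have hji : j < i := by omega
    have := off_mono μ (show j + 1 ≤ i from hji)
    omega

lemma card_KK (μ : n.Partition) {j : ℕ} (hj : off μ (j+1) ≤ n) : (KK μ j).card = wgt μ j := by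
  have key : KK μ j = (Finset.Ico (off μ j) (off μ (j+1))).attachFin
      (fun x hx => by rw [Finset.mem_Ico] at hx; omega) := by
    ext x
    rw [mem_KK, Finset.mem_attachFin, Finset.mem_Ico]
  rw [key, Finset.card_attachFin, Nat.card_Ico, off_succ]
  omega

lemma exists_KK (μ : n.Partition) (hn2 : 2 ≤ n) (x : Fin n) :
    ∃ j, j < n ∧ x ∈ KK μ j := by
  classical
  have hP0 : off μ 0 ≤ x.val := by simp [off]
  obtain ⟨j, hjn, hPj, hmax⟩ : ∃ j, j ≤ n ∧ off μ j ≤ x.val ∧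
      ∀ j', j < j' → j' ≤ n → ¬ off μ j' ≤ x.val :=
    ⟨Nat.findGreatest (fun j => off μ j ≤ x.val) n, Nat.findGreatest_le n,
      Nat.findGreatest_spec (P := fun j => off μ j ≤ x.val) (Nat.zero_le n) hP0,
      fun j' h1 h2 => Nat.findGreatest_is_greatest (P := fun j => off μ j ≤ x.val) h1 h2⟩
  have hxn : x.val < n := x.isLt
  have hjlt : j < n := by
    rcases Nat.lt_or_ge j n with h | h
    · exact h
    · exfalso
      have hjeq : j = n := le_antisymm hjn h
      subst hjeq
      rw [off_n μ hn2] at hPj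
      omega
  refine ⟨j, hjlt, ?_⟩
  rw [mem_KK]
  refine ⟨hPj, ?_⟩
  by_contra hcon
  push_neg at hcon
  exact hmax (j+1) (Nat.lt_succ_self j) (by omega) hcon

lemma unique_KK (μ : n.Partition) (hn2 : 2 ≤ n) (x : Fin n) :
    ∃! j, j ∈ Finset.range n ∧ x ∈ KK μ j := by
  obtain ⟨j, hj, hx⟩ := exists_KK μ hn2 x
  refine ⟨j, ⟨Finset.mem_range.2 hj, hx⟩, ?_⟩
  rintro j' ⟨hj', hx'⟩
  by_contra hne
  exact KK_disjoint hne hx' hx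

lemma sum_card_inter_KK (μ : n.Partition) (hn2 : 2 ≤ n) (S : Finset (Fin n)) :
    ∑ j ∈ Finset.range n, (S ∩ KK μ j).card = S.card := by
  have h1 : ∀ j, (S ∩ KK μ j).card = ∑ x ∈ S, if x ∈ KK μ j then 1 else 0 := by
    intro j
    rw [← Finset.filter_mem_eq_inter, Finset.card_filter]
  simp only [h1]
  rw [Finset.sum_comm]
  have h2 : ∀ x ∈ S, (∑ j ∈ Finset.range n, if x ∈ KK μ j then 1 else 0) = 1 := by
    intro x _
    rw [Finset.sum_boole]
    obtain ⟨j, hj, huniq⟩ := unique_KK μ hn2 x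
    rw [show (Finset.range n).filter (fun j => x ∈ KK μ j) = {j} from ?_]
    · simp
    · ext j'
      simp only [Finset.mem_filter, Finset.mem_singleton]
      constructor
      · intro h; exact huniq j' h
      · rintro rfl; exact hj
  rw [Finset.sum_congr rfl h2]
  simp

/-! ### Sum bounds for injective functions -/

lemma finset_gauss (s : Finset ℕ) : ∑ i ∈ Finset.range s.card, i ≤ ∑ x ∈ s, x := by
  induction s using Finset.strongInduction with
  | H s ih =>
    rcases s.eq_empty_or_nonempty with rfl | hne
    · simp
    · have hM : s.max' hne ∈ s := Finset.max'_mem s hne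
      set M := s.max' hne with hMdef
      have hcard : s.card - 1 ≤ M := by
        have hsub : s ⊆ Finset.range (M + 1) := fun x hx =>
          Finset.mem_range.2 (Nat.lt_succ_of_le (Finset.le_max' s x hx))
        have := Finset.card_le_card hsub
        rw [Finset.card_range] at this
        omega
      have hih := ih (s.erase M) (Finset.erase_ssubset hM)
      rw [Finset.card_erase_of_mem hM] at hih
      have hsum : ∑ x ∈ s, x = M + ∑ x ∈ s.erase M, x := (Finset.add_sum_erase _ _ hM).symm
      have hc1 : 1 ≤ s.card := Finset.card_pos.2 hne
      obtain ⟨c, hc⟩ : ∃ c, s.card = c + 1 := ⟨s.card - 1, by omega⟩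
      rw [hc, Finset.sum_range_succ]
      rw [hc] at hih hcard
      simp only [Nat.add_sub_cancel] at hih hcard
      omega

lemma sum_fin_inj {k : ℕ} (f : Fin k → ℕ) (hf : Function.Injective f) :
    ∑ i ∈ Finset.range k, i ≤ ∑ u : Fin k, f u := by
  have h1 : (Finset.univ.image f).card = k := by
    rw [Finset.card_image_of_injective _ hf, Finset.card_univ, Fintype.card_fin]
  have h2 := finset_gauss (Finset.univ.image f)
  rw [h1, Finset.sum_image (fun a _ b _ h => hf h)] at h2
  exact h2

/-! ### The Vandermonde certificate -/

section VBlock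

variable (μ : n.Partition) (hmn : colc μ 2 + colc μ 1 ≤ n)

def em (s : Fin (colc μ 1)) : Fin n := ⟨colc μ 2 + s.val, by have := s.isLt; omega⟩

lemma em_injective : Function.Injective (em μ hmn) := by
  intro s t h
  have : colc μ 2 + s.val = colc μ 2 + t.val := congrArg Fin.val h
  exact Fin.ext (by omega)

lemma mem_KK_one_iff {x : Fin n} : x ∈ KK μ 1 ↔ ∃ s, em μ hmn s = x := by
  rw [mem_KK, off_one, off_two]
  constructor
  · rintro ⟨h1, h2⟩
    exact ⟨⟨x.val - colc μ 2, by omega⟩, Fin.ext (by simp [em]; omega)⟩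
  · rintro ⟨s, rfl⟩
    have := s.isLt
    simp [em]

lemma em_mem_KK_one (s : Fin (colc μ 1)) : em μ hmn s ∈ KK μ 1 :=
  (mem_KK_one_iff μ hmn).2 ⟨s, rfl⟩

noncomputable def stair (σ : Equiv.Perm (Fin (colc μ 1))) : Fin n →₀ ℕ :=
  ∑ s : Fin (colc μ 1), Finsupp.single (em μ hmn s) (σ s).val

lemma stair_em (σ : Equiv.Perm (Fin (colc μ 1))) (s : Fin (colc μ 1)) :
    stair μ hmn σ (em μ hmn s) = (σ s).val := by
  unfold stair
  rw [Finset.sum_apply']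
  rw [Finset.sum_eq_single s]
  · simp
  · intro u _ hus
    rw [Finsupp.single_apply, if_neg (fun h => hus (em_injective μ hmn h))]
  · simp

lemma stair_outside (σ : Equiv.Perm (Fin (colc μ 1))) {x : Fin n} (hx : x ∉ KK μ 1) :
    stair μ hmn σ x = 0 := by
  unfold stair
  rw [Finset.sum_apply']
  apply Finset.sum_eq_zero
  intro u _
  rw [Finsupp.single_apply, if_neg (fun h => hx ((mem_KK_one_iff μ hmn).2 ⟨u, h⟩))]

noncomputable def VV (F : Type*) [Field F] : MvPolynomial (Fin n) F :=
  ∑ σ : Equiv.Perm (Fin (colc μ 1)), monomial (stair μ hmn σ) ((Equiv.Perm.sign σ : ℤ) : F)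

lemma coeff_VV (e : Fin n →₀ ℕ) :
    coeff e (VV μ hmn F) = ∑ σ : Equiv.Perm (Fin (colc μ 1)),
      if stair μ hmn σ = e then ((Equiv.Perm.sign σ : ℤ) : F) else 0 := by
  unfold VV
  rw [coeff_sum]
  exact Finset.sum_congr rfl fun σ _ => coeff_monomial _ _ _

lemma coeff_VV_stair (σ : Equiv.Perm (Fin (colc μ 1))) :
    coeff (stair μ hmn σ) (VV μ hmn F) = ((Equiv.Perm.sign σ : ℤ) : F) := by
  rw [coeff_VV, Finset.sum_eq_single σ]
  · rw [if_pos rfl]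
  · intro τ _ hτ
    rw [if_neg]
    intro h
    apply hτ
    ext s
    have h1 := congrArg (fun f => f (em μ hmn s)) h
    simp only [stair_em] at h1
    exact h1
  · intro h
    exact absurd (Finset.mem_univ σ) h

lemma coeff_VV_ne (e : Fin n →₀ ℕ) (h : coeff e (VV μ hmn F) ≠ 0) :
    ∃ σ, stair μ hmn σ = e := by
  by_contra hc
  push_neg at hc
  rw [coeff_VV] at h
  exact h (Finset.sum_eq_zero fun σ _ => if_neg (hc σ))

lemma coeff_VV_outside (e : Fin n →₀ ℕ) {x : Fin n} (hx : x ∉ KK μ 1) (hex : e x ≠ 0) :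
    coeff e (VV μ hmn F) = 0 := by
  by_contra h
  obtain ⟨σ, rfl⟩ := coeff_VV_ne μ hmn e h
  exact hex (stair_outside μ hmn σ hx)

/-- One direction of the stair swap correspondence. -/
lemma stair_swap_dir {u v : Fin (colc μ 1)} (hne : u ≠ v) {e e' : Fin n →₀ ℕ}
    (h1 : e' (em μ hmn u) = e (em μ hmn v)) (h2 : e' (em μ hmn v) = e (em μ hmn u))
    (h3 : ∀ x, x ≠ em μ hmn u → x ≠ em μ hmn v → e' x = e x)
    {τ : Equiv.Perm (Fin (colc μ 1))} (hτ : stair μ hmn τ = e) :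
    stair μ hmn (τ * Equiv.swap u v) = e' := by
  ext x
  by_cases hx : x ∈ KK μ 1
  · obtain ⟨w, rfl⟩ := (mem_KK_one_iff μ hmn).1 hx
    rw [stair_em]
    rcases eq_or_ne w u with rfl | hwu
    · rw [show (τ * Equiv.swap w v) w = τ v from by simp [Equiv.Perm.mul_apply], h1, ← hτ, stair_em]
    rcases eq_or_ne w v with rfl | hwv
    · rw [show (τ * Equiv.swap u w) w = τ u from by simp [Equiv.Perm.mul_apply], h2, ← hτ, stair_em]
    · rw [show (τ * Equiv.swap u v) w = τ w from by
        simp [Equiv.Perm.mul_apply, Equiv.swap_apply_of_ne_of_ne hwu hwv]]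
      rw [h3 _ (fun h => hwu (em_injective μ hmn h)) (fun h => hwv (em_injective μ hmn h)),
        ← hτ, stair_em]
  · rw [stair_outside μ hmn _ hx,
      h3 x (fun h => hx (h ▸ em_mem_KK_one μ hmn u)) (fun h => hx (h ▸ em_mem_KK_one μ hmn v)),
      ← hτ, stair_outside μ hmn _ hx]

lemma coeff_VV_swap {u v : Fin (colc μ 1)} (hne : u ≠ v) {e e' : Fin n →₀ ℕ}
    (h1 : e' (em μ hmn u) = e (em μ hmn v)) (h2 : e' (em μ hmn v) = e (em μ hmn u))
    (h3 : ∀ x, x ≠ em μ hmn u → x ≠ em μ hmn v → e' x = e x) :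
    coeff e' (VV μ hmn F) = - coeff e (VV μ hmn F) := by
  rw [coeff_VV, coeff_VV, ← Finset.sum_neg_distrib]
  refine Fintype.sum_equiv (Equiv.mulRight (Equiv.swap u v)) _ _ fun τ => ?_
  simp only [Equiv.coe_mulRight]
  show (if stair μ hmn τ = e' then _ else _) = -(if stair μ hmn (τ * Equiv.swap u v) = e then _ else _)
  have hsign : ((Equiv.Perm.sign (τ * Equiv.swap u v) : ℤ) : F)
      = -((Equiv.Perm.sign τ : ℤ) : F) := by
    rw [Equiv.Perm.sign_mul, Equiv.Perm.sign_swap hne]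
    push_cast
    ring
  by_cases hτ : stair μ hmn τ = e'
  · have hswap : stair μ hmn (τ * Equiv.swap u v) = e :=
      stair_swap_dir μ hmn hne (e := e') (e' := e) h2.symm h1.symm
        (fun x hx1 hx2 => (h3 x hx1 hx2).symm) hτ
    rw [if_pos hτ, if_pos hswap, hsign]
    ring
  · rw [if_neg hτ, if_neg, neg_zero]
    intro hcon
    apply hτ
    have := stair_swap_dir μ hmn hne h1 h2 h3 hcon
    rwa [mul_assoc, Equiv.swap_mul_self, mul_one] at this

lemma block_lemma (d : Fin n →₀ ℕ) {s : ℕ} (hs : 1 ≤ s) :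
    ∑ T ∈ (KK μ 1).powersetCard s, coeff (d + indi T) (VV μ hmn F) = 0 := by
  classical
  by_cases hcol : ∃ u v : Fin (colc μ 1), u ≠ v ∧ d (em μ hmn u) = d (em μ hmn v)
  · obtain ⟨u, v, hne, heq⟩ := hcol
    have hpq : em μ hmn u ≠ em μ hmn v := fun h => hne (em_injective μ hmn h)
    set p := em μ hmn u with hpdef
    set q := em μ hmn v with hqdef
    have hzero : ∀ T : Finset (Fin n), ((p ∈ T) ↔ (q ∈ T)) →
        coeff (d + indi T) (VV μ hmn F) = 0 := by
      intro T hiff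
      by_contra h0
      obtain ⟨σ, hσ⟩ := coeff_VV_ne μ hmn _ h0
      have hep : (d + indi T) p = (d + indi T) q := by
        simp only [Finsupp.add_apply, indi_apply]
        rw [heq, if_congr hiff rfl rfl]
      have h1' := congrArg (fun f => f p) hσ
      have h2' := congrArg (fun f => f q) hσ
      simp only [hpdef, hqdef, stair_em] at h1' h2'
      have : σ u = σ v := Fin.ext (by rw [h1', h2', hep])
      exact hne (σ.injective this)
    have hcoefswap : ∀ (T : Finset (Fin n)), p ∈ T → q ∉ T →
        coeff (d + indi (insert q (T.erase p))) (VV μ hmn F)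
          = - coeff (d + indi T) (VV μ hmn F) := by
      intro T hpT hqT
      apply coeff_VV_swap μ hmn hne
      · simp only [Finsupp.add_apply, indi_apply]
        rw [if_neg (by simp [Finset.mem_insert, Finset.mem_erase, hpq, ← hpdef]), if_neg hqT, heq]
      · simp only [Finsupp.add_apply, indi_apply]
        rw [if_pos (Finset.mem_insert_self _ _), if_pos hpT, heq]
      · intro x hxp hxq
        simp only [Finsupp.add_apply, indi_apply]
        have hiff : x ∈ insert q (T.erase p) ↔ x ∈ T := by
          simp only [Finset.mem_insert, Finset.mem_erase]
          constructor
          · rintro (rfl | ⟨_, hxT⟩)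
            · exact absurd rfl hxq
            · exact hxT
          · intro hxT
            exact Or.inr ⟨hxp, hxT⟩
        rw [if_congr hiff rfl rfl]
    refine Finset.sum_involution
      (fun T _ => if p ∈ T ∧ q ∉ T then insert q (T.erase p)
        else if q ∈ T ∧ p ∉ T then insert p (T.erase q) else T) ?_ ?_ ?_ ?_
    · intro T hT
      by_cases h1 : p ∈ T ∧ q ∉ T
      · rw [if_pos h1, hcoefswap T h1.1 h1.2]
        ring
      · by_cases h2 : q ∈ T ∧ p ∉ T
        · rw [if_neg h1, if_pos h2]
          have hkey := hcoefswap (insert p (T.erase q)) (Finset.mem_insert_self _ _)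
            (by
              intro hmem
              rcases Finset.mem_insert.1 hmem with h | h
              · exact hpq h.symm
              · exact Finset.notMem_erase q T h)
          rw [show insert q ((insert p (T.erase q)).erase p) = T from by
            rw [Finset.erase_insert (by simp [Finset.mem_erase]; exact fun _ => h2.2),
              Finset.insert_erase h2.1]] at hkey
          rw [hkey]
          ring
        · rw [if_neg h1, if_neg h2, hzero T (by tauto)]
          ring
    · intro T hT hfT
      by_cases h1 : p ∈ T ∧ q ∉ T
      · rw [if_pos h1]
        intro hEq
        exact h1.2 (hEq ▸ Finset.mem_insert_self q _)
      · by_cases h2 : q ∈ T ∧ p ∉ T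
        · rw [if_neg h1, if_pos h2]
          intro hEq
          exact h2.2 (hEq ▸ Finset.mem_insert_self p _)
        · exact absurd (hzero T (by tauto)) hfT
    · intro T hT
      rw [Finset.mem_powersetCard] at hT ⊢
      by_cases h1 : p ∈ T ∧ q ∉ T
      · rw [if_pos h1]
        constructor
        · intro x hx
          rcases Finset.mem_insert.1 hx with rfl | hx'
          · exact em_mem_KK_one μ hmn v
          · exact hT.1 (Finset.erase_subset _ _ hx')
        · rw [Finset.card_insert_of_notMem (by simp [Finset.mem_erase]; intro _; exact h1.2),
            Finset.card_erase_of_mem h1.1, hT.2]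
          have : 1 ≤ s := hs
          omega
      · by_cases h2 : q ∈ T ∧ p ∉ T
        · rw [if_neg h1, if_pos h2]
          constructor
          · intro x hx
            rcases Finset.mem_insert.1 hx with rfl | hx'
            · exact em_mem_KK_one μ hmn u
            · exact hT.1 (Finset.erase_subset _ _ hx')
          · rw [Finset.card_insert_of_notMem (by simp [Finset.mem_erase]; intro _; exact h2.2),
              Finset.card_erase_of_mem h2.1, hT.2]
            omega
        · rw [if_neg h1, if_neg h2]
          exact hT
    · intro T hT
      by_cases h1 : p ∈ T ∧ q ∉ T
      · simp only [if_pos h1]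
        have hc1 : ¬ (p ∈ insert q (T.erase p) ∧ q ∉ insert q (T.erase p)) := by
          simp [Finset.mem_insert]
        have hc2 : q ∈ insert q (T.erase p) ∧ p ∉ insert q (T.erase p) := by
          constructor
          · exact Finset.mem_insert_self _ _
          · simp [Finset.mem_insert, Finset.mem_erase, hpq]
        rw [if_neg hc1, if_pos hc2, Finset.erase_insert (by simp [Finset.mem_erase, hpq.symm, h1.2]),
          Finset.insert_erase h1.1]
      · by_cases h2 : q ∈ T ∧ p ∉ T
        · simp only [if_neg h1, if_pos h2]
          have hc1 : p ∈ insert p (T.erase q) ∧ q ∉ insert p (T.erase q) := by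
            constructor
            · exact Finset.mem_insert_self _ _
            · simp [Finset.mem_insert, Finset.mem_erase, hpq.symm]
          rw [if_pos hc1, Finset.erase_insert (by simp [Finset.mem_erase, hpq, h2.2]),
            Finset.insert_erase h2.1]
        · simp only [if_neg h1, if_neg h2]
  · push_neg at hcol
    have hinj : Function.Injective (fun u => d (em μ hmn u)) := by
      intro u v h
      by_contra hne
      exact hcol u v hne h
    apply Finset.sum_eq_zero
    intro T hT
    by_contra h0
    obtain ⟨σ, hσ⟩ := coeff_VV_ne μ hmn _ h0
    rw [Finset.mem_powersetCard] at hT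
    have hsum : ∀ w : Fin (colc μ 1), (σ w).val = d (em μ hmn w) + indi T (em μ hmn w) := by
      intro w
      have h1 := congrArg (fun f => f (em μ hmn w)) hσ
      simp only [stair_em, Finsupp.add_apply] at h1
      exact h1
    have hA : ∑ w : Fin (colc μ 1), (σ w).val = ∑ i ∈ Finset.range (colc μ 1), i := by
      rw [← Fin.sum_univ_eq_sum_range]
      exact Equiv.sum_comp σ Fin.val
    have hB : ∑ w : Fin (colc μ 1), indi T (em μ hmn w) = s := by
      simp only [indi_apply]
      rw [Finset.sum_boole, Nat.cast_id]
      rw [← hT.2]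
      apply Finset.card_bij (fun w _ => em μ hmn w)
      · intro w hw
        exact (Finset.mem_filter.1 hw).2
      · intro w _ w' _ h
        exact em_injective μ hmn h
      · intro x hx
        obtain ⟨w, rfl⟩ := (mem_KK_one_iff μ hmn).1 (hT.1 hx)
        exact ⟨w, Finset.mem_filter.2 ⟨Finset.mem_univ _, hx⟩, rfl⟩
    have hC := sum_fin_inj _ hinj
    have hD : ∑ w : Fin (colc μ 1), (σ w).val
        = (∑ w : Fin (colc μ 1), d (em μ hmn w)) + s := by
      rw [← hB, ← Finset.sum_add_distrib]
      exact Finset.sum_congr rfl fun w _ => hsum w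
    rw [hA] at hD
    have : (∑ w : Fin (colc μ 1), d (em μ hmn w)) = ∑ w : Fin (colc μ 1), (fun u => d (em μ hmn u)) w := rfl
    omega

end VBlock

/-! ### Finsupp helpers -/

lemma sub_single_apply_ne (e : Fin n →₀ ℕ) {x y : Fin n} (h : y ≠ x) :
    ((e - Finsupp.single y 1 : Fin n →₀ ℕ)) x = e x := by
  rw [Finsupp.tsub_apply, Finsupp.single_apply, if_neg h, tsub_zero]

lemma add_indi_sub_single (d : Fin n →₀ ℕ) {x : Fin n} {T : Finset (Fin n)} (hxT : x ∉ T) :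
    d + indi T - Finsupp.single x 1 = (d - Finsupp.single x 1) + indi T := by
  ext y
  simp only [Finsupp.tsub_apply, Finsupp.add_apply, Finsupp.single_apply, indi_apply]
  rcases eq_or_ne x y with rfl | hxy
  · rw [if_neg hxT, if_pos rfl]
    omega
  · rw [if_neg hxy]
    by_cases hyT : y ∈ T
    · rw [if_pos hyT]
      omega
    · rw [if_neg hyT]
      omega

lemma add_single_sub_single (d : Fin n →₀ ℕ) (x : Fin n) :
    d + Finsupp.single x 1 - Finsupp.single x 1 = d := by
  ext y
  simp only [Finsupp.tsub_apply, Finsupp.add_apply, Finsupp.single_apply]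
  split_ifs <;> omega

lemma indi_singleton (x : Fin n) : indi ({x} : Finset (Fin n)) = Finsupp.single x 1 := by
  unfold indi
  rw [Finset.sum_singleton]

lemma expval_ne (d : Fin n →₀ ℕ) (T : Finset (Fin n)) {x y : Fin n} (hx : x ∈ T) (hyx : y ≠ x) :
    ((d + indi T - Finsupp.single y 1 : Fin n →₀ ℕ)) x ≠ 0 := by
  rw [Finsupp.tsub_apply, Finsupp.add_apply, indi_apply, if_pos hx, Finsupp.single_apply,
    if_neg hyx]
  omega

/-! ### The special points -/

def aaP {n : ℕ} (μ : n.Partition) (hn1 : 1 ≤ n) : Fin n :=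
  ⟨colc μ 2 - 1, by
    have h1 := colc_anti μ (show 1 ≤ 2 by omega)
    have h2 := colc_le_n μ
    omega⟩

def ccP {n : ℕ} (μ : n.Partition) (hn1 : 1 ≤ n) : Fin n := ⟨0, hn1⟩

section Kill

variable (μ : n.Partition) (hmn : colc μ 2 + colc μ 1 ≤ n) (hn1 : 1 ≤ n) (hm2 : 2 ≤ colc μ 2)

include hm2 in
lemma aa_mem_KK0 : aaP μ hn1 ∈ KK μ 0 := by
  rw [mem_KK, off_one]
  simp only [aaP, off]
  simp
  omega

include hm2 in
lemma cc_mem_KK0 : ccP μ hn1 ∈ KK μ 0 := by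
  rw [mem_KK, off_one]
  simp only [ccP, off]
  simp
  omega

include hm2 in
lemma aa_ne_cc : aaP μ hn1 ≠ ccP μ hn1 := by
  intro h
  have := congrArg Fin.val h
  simp only [aaP, ccP] at this
  omega

include hm2 in
lemma aa_not_KK1 : aaP μ hn1 ∉ KK μ 1 :=
  fun h => KK_disjoint (show (0:ℕ) ≠ 1 by omega) (aa_mem_KK0 μ hn1 hm2) h

include hm2 in
lemma cc_not_KK1 : ccP μ hn1 ∉ KK μ 1 :=
  fun h => KK_disjoint (show (0:ℕ) ≠ 1 by omega) (cc_mem_KK0 μ hn1 hm2) h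

include hm2 in
lemma kill (j : ℕ) (d : Fin n →₀ ℕ) {s : ℕ} (hs : 1 ≤ s) :
    ∑ T ∈ (KK μ j).powersetCard s,
      coeff (d + indi T) (VV μ hmn F * (X (aaP μ hn1) - X (ccP μ hn1))) = 0 := by
  classical
  set A := aaP μ hn1 with hAdef
  set C := ccP μ hn1 with hCdef
  have hco : ∀ e : Fin n →₀ ℕ, coeff e (VV μ hmn F * (X A - X C)) =
      (if A ∈ e.support then coeff (e - Finsupp.single A 1) (VV μ hmn F) else 0)
        - (if C ∈ e.support then coeff (e - Finsupp.single C 1) (VV μ hmn F) else 0) := by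
    intro e
    rw [mul_sub, coeff_sub, coeff_mul_X', coeff_mul_X']
  have hAK1 : A ∉ KK μ 1 := aa_not_KK1 μ hn1 hm2
  have hCK1 : C ∉ KK μ 1 := cc_not_KK1 μ hn1 hm2
  match j with
  | 1 =>
    have hterm : ∀ T ∈ (KK μ 1).powersetCard s,
        coeff (d + indi T) (VV μ hmn F * (X A - X C))
          = (if d A ≠ 0 then coeff ((d - Finsupp.single A 1) + indi T) (VV μ hmn F) else 0)
            - (if d C ≠ 0 then coeff ((d - Finsupp.single C 1) + indi T) (VV μ hmn F) else 0) := by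
      intro T hT
      have hTsub := (Finset.mem_powersetCard.1 hT).1
      have hAT : A ∉ T := fun h => hAK1 (hTsub h)
      have hCT : C ∉ T := fun h => hCK1 (hTsub h)
      have hvalA : (d + indi T) A = d A := by
        simp [Finsupp.add_apply, indi_apply, hAT]
      have hvalC : (d + indi T) C = d C := by
        simp [Finsupp.add_apply, indi_apply, hCT]
      rw [hco]
      congr 1
      · simp only [Finsupp.mem_support_iff, hvalA]
        by_cases hdA : d A = 0
        · rw [if_neg (by simpa using hdA), if_neg (by simpa using hdA)]
        · rw [if_pos hdA, if_pos hdA, add_indi_sub_single d hAT]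
      · simp only [Finsupp.mem_support_iff, hvalC]
        by_cases hdC : d C = 0
        · rw [if_neg (by simpa using hdC), if_neg (by simpa using hdC)]
        · rw [if_pos hdC, if_pos hdC, add_indi_sub_single d hCT]
    rw [Finset.sum_congr rfl hterm, Finset.sum_sub_distrib]
    have hA0 : ∑ T ∈ (KK μ 1).powersetCard s,
        (if d A ≠ 0 then coeff ((d - Finsupp.single A 1) + indi T) (VV μ hmn F) else 0) = 0 := by
      by_cases hdA : d A ≠ 0
      · simp only [if_pos hdA]
        exact block_lemma μ hmn _ hs
      · simp only [if_neg hdA, Finset.sum_const_zero]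
    have hC0 : ∑ T ∈ (KK μ 1).powersetCard s,
        (if d C ≠ 0 then coeff ((d - Finsupp.single C 1) + indi T) (VV μ hmn F) else 0) = 0 := by
      by_cases hdC : d C ≠ 0
      · simp only [if_pos hdC]
        exact block_lemma μ hmn _ hs
      · simp only [if_neg hdC, Finset.sum_const_zero]
    rw [hA0, hC0, sub_zero]
  | 0 =>
    rcases Nat.lt_or_ge s 2 with hs2 | hs2
    · -- s = 1
      have hseq : s = 1 := by omega
      subst hseq
      rw [Finset.powersetCard_one, Finset.sum_map]
      simp only [Function.Embedding.coeFn_mk, indi_singleton]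
      have hAsum : ∑ x ∈ KK μ 0,
          (if A ∈ (d + Finsupp.single x 1).support
            then coeff (d + Finsupp.single x 1 - Finsupp.single A 1) (VV μ hmn F) else 0)
          = coeff d (VV μ hmn F) := by
        rw [Finset.sum_eq_single_of_mem A (aa_mem_KK0 μ hn1 hm2)]
        · rw [if_pos (by rw [Finsupp.mem_support_iff, Finsupp.add_apply, Finsupp.single_apply,
            if_pos rfl]; omega), add_single_sub_single]
        · intro x hx hxA
          have hxK1 : x ∉ KK μ 1 :=
            fun h => KK_disjoint (show (0:ℕ) ≠ 1 by omega) hx h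
          by_cases hsup : A ∈ (d + Finsupp.single x 1).support
          · rw [if_pos hsup]
            apply coeff_VV_outside μ hmn _ hxK1
            rw [show d + Finsupp.single x 1 = d + indi ({x} : Finset (Fin n)) from by
              rw [indi_singleton]]
            exact expval_ne d {x} (Finset.mem_singleton_self x) (Ne.symm hxA)
          · rw [if_neg hsup]
      have hCsum : ∑ x ∈ KK μ 0,
          (if C ∈ (d + Finsupp.single x 1).support
            then coeff (d + Finsupp.single x 1 - Finsupp.single C 1) (VV μ hmn F) else 0)
          = coeff d (VV μ hmn F) := by
        rw [Finset.sum_eq_single_of_mem C (cc_mem_KK0 μ hn1 hm2)]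
        · rw [if_pos (by rw [Finsupp.mem_support_iff, Finsupp.add_apply, Finsupp.single_apply,
            if_pos rfl]; omega), add_single_sub_single]
        · intro x hx hxC
          have hxK1 : x ∉ KK μ 1 :=
            fun h => KK_disjoint (show (0:ℕ) ≠ 1 by omega) hx h
          by_cases hsup : C ∈ (d + Finsupp.single x 1).support
          · rw [if_pos hsup]
            apply coeff_VV_outside μ hmn _ hxK1
            rw [show d + Finsupp.single x 1 = d + indi ({x} : Finset (Fin n)) from by
              rw [indi_singleton]]
            exact expval_ne d {x} (Finset.mem_singleton_self x) (Ne.symm hxC)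
          · rw [if_neg hsup]
      calc ∑ x ∈ KK μ 0, coeff (d + Finsupp.single x 1) (VV μ hmn F * (X A - X C))
          = ∑ x ∈ KK μ 0,
            ((if A ∈ (d + Finsupp.single x 1).support
              then coeff (d + Finsupp.single x 1 - Finsupp.single A 1) (VV μ hmn F) else 0)
            - (if C ∈ (d + Finsupp.single x 1).support
              then coeff (d + Finsupp.single x 1 - Finsupp.single C 1) (VV μ hmn F) else 0)) :=
            Finset.sum_congr rfl fun x _ => hco _
        _ = 0 := by rw [Finset.sum_sub_distrib, hAsum, hCsum, sub_self]
    · -- s ≥ 2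
      apply Finset.sum_eq_zero
      intro T hT
      rw [Finset.mem_powersetCard] at hT
      rw [hco]
      obtain ⟨x, hxT, hxA⟩ := Finset.exists_mem_ne (by omega : 1 < T.card) A
      obtain ⟨y, hyT, hyC⟩ := Finset.exists_mem_ne (by omega : 1 < T.card) C
      have hxK1 : x ∉ KK μ 1 :=
        fun h => KK_disjoint (show (0:ℕ) ≠ 1 by omega) (hT.1 hxT) h
      have hyK1 : y ∉ KK μ 1 :=
        fun h => KK_disjoint (show (0:ℕ) ≠ 1 by omega) (hT.1 hyT) h
      have hA0 : (if A ∈ (d + indi T).support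
          then coeff (d + indi T - Finsupp.single A 1) (VV μ hmn F) else 0) = 0 := by
        by_cases hsup : A ∈ (d + indi T).support
        · rw [if_pos hsup]
          exact coeff_VV_outside μ hmn _ hxK1 (expval_ne d T hxT (Ne.symm hxA))
        · rw [if_neg hsup]
      have hC0 : (if C ∈ (d + indi T).support
          then coeff (d + indi T - Finsupp.single C 1) (VV μ hmn F) else 0) = 0 := by
        by_cases hsup : C ∈ (d + indi T).support
        · rw [if_pos hsup]
          exact coeff_VV_outside μ hmn _ hyK1 (expval_ne d T hyT (Ne.symm hyC))
        · rw [if_neg hsup]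
      rw [hA0, hC0, sub_self]
  | (j+2) =>
    apply Finset.sum_eq_zero
    intro T hT
    rw [Finset.mem_powersetCard] at hT
    have hTne : T.Nonempty := Finset.card_pos.1 (by omega)
    obtain ⟨x, hxT⟩ := hTne
    have hxKj : x ∈ KK μ (j+2) := hT.1 hxT
    have hxK1 : x ∉ KK μ 1 :=
      fun h => KK_disjoint (show (j+2:ℕ) ≠ 1 by omega) hxKj h
    have hxA : x ≠ A := fun h => KK_disjoint (show (j+2:ℕ) ≠ 0 by omega) hxKj
      (h ▸ aa_mem_KK0 μ hn1 hm2)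
    have hxC : x ≠ C := fun h => KK_disjoint (show (j+2:ℕ) ≠ 0 by omega) hxKj
      (h ▸ cc_mem_KK0 μ hn1 hm2)
    rw [hco]
    have hA0 : (if A ∈ (d + indi T).support
        then coeff (d + indi T - Finsupp.single A 1) (VV μ hmn F) else 0) = 0 := by
      by_cases hsup : A ∈ (d + indi T).support
      · rw [if_pos hsup]
        exact coeff_VV_outside μ hmn _ hxK1 (expval_ne d T hxT (Ne.symm hxA))
      · rw [if_neg hsup]
    have hC0 : (if C ∈ (d + indi T).support
        then coeff (d + indi T - Finsupp.single C 1) (VV μ hmn F) else 0) = 0 := by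
      by_cases hsup : C ∈ (d + indi T).support
      · rw [if_pos hsup]
        exact coeff_VV_outside μ hmn _ hxK1 (expval_ne d T hxT (Ne.symm hxC))
      · rw [if_neg hsup]
    rw [hA0, hC0, sub_self]

end Kill

/-! ### The block ideal JJ and containment -/

noncomputable def JJ (F : Type*) [Field F] (μ : n.Partition) : Ideal (MvPolynomial (Fin n) F) :=
  Ideal.span {g | ∃ j, j < n ∧ ∃ s, 1 ≤ s ∧ g = esymmS F (KK μ j) s}

lemma esymmS_union {U W : Finset (Fin n)} (hUW : Disjoint U W) (r : ℕ) :
    esymmS F (U ∪ W) r = ∑ p ∈ Finset.range (r+1), esymmS F U p * esymmS F W (r - p) := by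
  classical
  induction U using Finset.induction generalizing r with
  | empty =>
    rw [Finset.empty_union, Finset.sum_eq_single 0]
    · rw [esymmS_zero, one_mul, Nat.sub_zero]
    · intro p hp hp0
      rw [show esymmS F (∅ : Finset (Fin n)) p = 0 from
        esymmS_of_card_lt (by simpa using Nat.pos_of_ne_zero hp0), zero_mul]
    · intro h0
      exact absurd (Finset.mem_range.2 (by omega)) h0
  | @insert x U hx ih =>
    have hdisj : Disjoint U W := Finset.disjoint_of_subset_left (Finset.subset_insert x U) hUW
    have hxW : x ∉ W := Finset.disjoint_left.1 hUW (Finset.mem_insert_self x U)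
    have hxUW : x ∉ U ∪ W := by simp [hx, hxW]
    rcases r with _ | r
    · rw [esymmS_zero, Finset.sum_range_one, esymmS_zero, esymmS_zero, one_mul]
    · rw [show insert x U ∪ W = insert x (U ∪ W) from Finset.insert_union x U W,
        esymmS_insert hxUW, ih hdisj, ih hdisj]
      have hL2 : ∑ p ∈ Finset.range (r+1+1), esymmS F U p * esymmS F W (r+1-p)
          = (∑ p ∈ Finset.range (r+1), esymmS F U (p+1) * esymmS F W (r-p))
            + esymmS F W (r+1) := by
        rw [Finset.sum_range_succ']
        congr 1
        · refine Finset.sum_congr rfl fun p _ => ?_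
          rw [Nat.succ_sub_succ]
        · rw [esymmS_zero, one_mul, Nat.sub_zero]
      have hR : ∑ p ∈ Finset.range (r+1+1), esymmS F (insert x U) p * esymmS F W (r+1-p)
          = (∑ p ∈ Finset.range (r+1),
              (X x * esymmS F U p + esymmS F U (p+1)) * esymmS F W (r-p))
            + esymmS F W (r+1) := by
        rw [Finset.sum_range_succ']
        congr 1
        · refine Finset.sum_congr rfl fun p _ => ?_
          rw [Nat.succ_sub_succ, esymmS_insert hx]
        · rw [esymmS_zero, one_mul, Nat.sub_zero]
      rw [hL2, hR]
      have hexp : ∑ p ∈ Finset.range (r+1),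
          (X x * esymmS F U p + esymmS F U (p+1)) * esymmS F W (r-p)
          = (∑ p ∈ Finset.range (r+1), X x * (esymmS F U p * esymmS F W (r-p)))
            + ∑ p ∈ Finset.range (r+1), esymmS F U (p+1) * esymmS F W (r-p) := by
        rw [← Finset.sum_add_distrib]
        refine Finset.sum_congr rfl fun p _ => ?_
        ring
      rw [hexp, ← Finset.mul_sum]
      ring

def Phi (μ : n.Partition) (j : ℕ) (S : Finset (Fin n)) (r : ℕ) : Prop :=
  ∀ ρ : ℕ → ℕ, (∑ t ∈ Finset.Ico j n, ρ t) = r →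
    ∃ t, t ∈ Finset.Ico j n ∧ ((S ∩ KK μ t).card < ρ t ∨ (KK μ t ⊆ S ∧ 1 ≤ ρ t))

lemma suffix_mem (μ : n.Partition) (hn2 : 2 ≤ n) :
    ∀ (u j : ℕ), j + u = n → ∀ S : Finset (Fin n), (∀ x ∈ S, off μ j ≤ x.val) →
      ∀ r, Phi μ j S r → esymmS F S r ∈ JJ F μ := by
  intro u
  induction u with
  | zero =>
    intro j hj S hS r hPhi
    have hjn : n = j := by omega
    subst hjn
    have hSempty : S = ∅ := by
      rw [Finset.eq_empty_iff_forall_notMem]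
      intro x hx
      have h1 := hS x hx
      rw [off_n μ hn2] at h1
      have := x.isLt
      omega
    subst hSempty
    rcases r with _ | r
    · exfalso
      obtain ⟨t, ht, _⟩ := hPhi (fun _ => 0) (by simp)
      rw [Finset.mem_Ico] at ht
      omega
    · rw [show esymmS F (∅ : Finset (Fin n)) (r+1) = 0 from esymmS_of_card_lt (by simp)]
      exact (JJ F μ).zero_mem
  | succ u ih =>
    intro j hj S hS r hPhi
    have hjn : j < n := by omega
    have hdisj : Disjoint (S ∩ KK μ j) (S \ KK μ j) := by
      rw [Finset.disjoint_left]
      intro x hx hx2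
      exact (Finset.mem_sdiff.1 hx2).2 (Finset.mem_inter.1 hx).2
    have hcover : (S ∩ KK μ j) ∪ (S \ KK μ j) = S := by
      ext x
      simp only [Finset.mem_union, Finset.mem_inter, Finset.mem_sdiff]
      tauto
    rw [← hcover, esymmS_union hdisj]
    apply Ideal.sum_mem
    intro p hp
    rw [Finset.mem_range] at hp
    by_cases hbig : (S ∩ KK μ j).card < p
    · rw [show esymmS F (S ∩ KK μ j) p = 0 from esymmS_of_card_lt hbig, zero_mul]
      exact (JJ F μ).zero_mem
    by_cases hfull : KK μ j ⊆ S ∧ 1 ≤ p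
    · have hKeq : S ∩ KK μ j = KK μ j := by
        rw [Finset.inter_eq_right]
        exact hfull.1
      rw [hKeq]
      exact Ideal.mul_mem_right _ _ (Ideal.subset_span ⟨j, hjn, p, hfull.2, rfl⟩)
    · apply Ideal.mul_mem_left
      apply ih (j+1) (by omega) _ ?_ _ ?_
      · intro x hx
        rw [Finset.mem_sdiff] at hx
        have h1 := hS x hx.1
        have h2 : ¬ (off μ j ≤ x.val ∧ x.val < off μ (j+1)) := fun hc => hx.2 (mem_KK.2 hc)
        omega
      · intro ρ' hρ'
        push_neg at hbig hfull
        have hsum : ∑ t ∈ Finset.Ico j n,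
            (fun t => if t = j then p else ρ' t) t = r := by
          rw [Finset.sum_eq_sum_Ico_succ_bot hjn]
          have h1 : ∑ t ∈ Finset.Ico (j+1) n, (if t = j then p else ρ' t)
              = ∑ t ∈ Finset.Ico (j+1) n, ρ' t := by
            refine Finset.sum_congr rfl fun t ht => ?_
            rw [Finset.mem_Ico] at ht
            exact if_neg (by omega)
          simp only [eq_self_iff_true, if_true]
          rw [h1, hρ']
          omega
        obtain ⟨t, ht, hcase⟩ := hPhi _ hsum
        rw [Finset.mem_Ico] at ht
        rcases eq_or_ne t j with rfl | htj
        · exfalso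
          simp only [eq_self_iff_true, if_true] at hcase
          rcases hcase with hc | hc
          · omega
          · have := hfull hc.1
            omega
        · refine ⟨t, Finset.mem_Ico.2 ⟨by omega, ht.2⟩, ?_⟩
          have hKt : ∀ y, y ∈ KK μ t → y ∉ KK μ j := fun y hy hyj => KK_disjoint htj hy hyj
          have hint : (S \ KK μ j) ∩ KK μ t = S ∩ KK μ t := by
            ext y
            simp only [Finset.mem_inter, Finset.mem_sdiff]
            constructor
            · rintro ⟨⟨h1, _⟩, h2⟩
              exact ⟨h1, h2⟩
            · rintro ⟨h1, h2⟩
              exact ⟨⟨h1, hKt y h2⟩, h2⟩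
          have hsub : KK μ t ⊆ S \ KK μ j ↔ KK μ t ⊆ S := by
            constructor
            · intro h y hy
              exact (Finset.mem_sdiff.1 (h hy)).1
            · intro h y hy
              exact Finset.mem_sdiff.2 ⟨h hy, hKt y hy⟩
          simp only [if_neg htj] at hcase
          rw [hint, hsub]
          exact hcase

lemma monolemma (μ : n.Partition) : ∀ (k : ℕ) (B : Finset ℕ), B ⊆ Finset.Icc 1 n → k ≤ B.card →
    ∑ i ∈ Finset.Icc (n + 1 - k) n, colc μ i ≤ ∑ i ∈ B, colc μ i := by
  intro k
  induction k with
  | zero =>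
    intro B hB h
    rw [show Finset.Icc (n+1-0) n = ∅ from Finset.Icc_eq_empty (by omega)]
    simp
  | succ k ihk =>
    intro B hB hcard
    have hne : B.Nonempty := Finset.card_pos.1 (by omega)
    have hxB : B.min' hne ∈ B := Finset.min'_mem B hne
    set x := B.min' hne with hxdef
    have hx1n : 1 ≤ x ∧ x ≤ n := by
      have := hB hxB
      simpa [Finset.mem_Icc] using this
    have hxle : x ≤ n - k := by
      have hsub : B ⊆ Finset.Icc x n := fun y hy =>
        Finset.mem_Icc.2 ⟨Finset.min'_le B y hy, (Finset.mem_Icc.1 (hB hy)).2⟩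
      have := Finset.card_le_card hsub
      rw [Nat.card_Icc] at this
      omega
    have hkn : k + 1 ≤ n := by
      have := Finset.card_le_card hB
      rw [Nat.card_Icc] at this
      omega
    have hB' : B.erase x ⊆ Finset.Icc 1 n := fun y hy => hB (Finset.erase_subset _ _ hy)
    have hB'card : k ≤ (B.erase x).card := by
      rw [Finset.card_erase_of_mem hxB]
      omega
    have hih := ihk (B.erase x) hB' hB'card
    have hsplit : Finset.Icc (n + 1 - (k+1)) n = insert (n - k) (Finset.Icc (n + 1 - k) n) := by
      ext i
      simp only [Finset.mem_Icc, Finset.mem_insert]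
      omega
    rw [hsplit, Finset.sum_insert (by simp only [Finset.mem_Icc]; omega)]
    have hcx : colc μ (n - k) ≤ colc μ x := colc_anti μ hxle
    have hBsum : ∑ i ∈ B, colc μ i = colc μ x + ∑ i ∈ B.erase x, colc μ i :=
      (Finset.add_sum_erase _ _ hxB).symm
    omega

lemma Phi_zero (μ : n.Partition) (hn2 : 2 ≤ n) {S : Finset (Fin n)} {k r : ℕ}
    (hcard : S.card = k) (hrk : r ≤ k) (hdk : k - dk n μ k < r) : Phi μ 0 S r := by
  classical
  intro ρ hρ
  by_contra hcon
  push_neg at hcon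
  rw [Nat.Ico_zero_eq_range] at hρ hcon
  set A := (Finset.range n).filter (fun t => KK μ t ⊆ S) with hAdef
  set Ac := (Finset.range n).filter (fun t => ¬ KK μ t ⊆ S) with hAcdef
  have hsplitρ : ∑ t ∈ Finset.range n, ρ t = (∑ t ∈ A, ρ t) + ∑ t ∈ Ac, ρ t :=
    (Finset.sum_filter_add_sum_filter_not _ _ _).symm
  have hAzero : ∀ t ∈ A, ρ t = 0 := by
    intro t ht
    rw [Finset.mem_filter] at ht
    have := (hcon t ht.1).2 ht.2
    omega
  have hA0 : ∑ t ∈ A, ρ t = 0 := Finset.sum_eq_zero hAzero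
  have hcardsplit : (∑ t ∈ A, (S ∩ KK μ t).card) + ∑ t ∈ Ac, (S ∩ KK μ t).card = k := by
    rw [Finset.sum_filter_add_sum_filter_not, sum_card_inter_KK μ hn2, hcard]
  have hwgtn : ∑ t ∈ Finset.range n, wgt μ t = n := off_n μ hn2
  have hAwgt : ∀ t ∈ A, (S ∩ KK μ t).card = wgt μ t := by
    intro t ht
    rw [Finset.mem_filter] at ht
    have hKeq : S ∩ KK μ t = KK μ t := by
      rw [Finset.inter_eq_right]
      exact ht.2
    rw [hKeq, card_KK μ (le_trans (off_mono μ (Finset.mem_range.1 ht.1)) (le_of_eq (off_n μ hn2)))]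
  have hAcbound : ∀ t ∈ Ac, (S ∩ KK μ t).card + 1 ≤ wgt μ t := by
    intro t ht
    rw [Finset.mem_filter] at ht
    have hcardK : (KK μ t).card = wgt μ t :=
      card_KK μ (le_trans (off_mono μ (Finset.mem_range.1 ht.1)) (le_of_eq (off_n μ hn2)))
    have hsub : S ∩ KK μ t ⊆ KK μ t := Finset.inter_subset_right
    have hle : (S ∩ KK μ t).card ≤ wgt μ t := hcardK ▸ Finset.card_le_card hsub
    rcases eq_or_lt_of_le hle with heq | hlt
    · exfalso
      have : S ∩ KK μ t = KK μ t :=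
        Finset.eq_of_subset_of_card_le hsub (by omega)
      exact ht.2 (fun y hy => (Finset.mem_inter.1 (this ▸ hy)).1)
    · omega
  -- |Ac| bound
  have hsumAc : (∑ t ∈ Ac, ((S ∩ KK μ t).card + 1)) ≤ ∑ t ∈ Ac, wgt μ t :=
    Finset.sum_le_sum hAcbound
  rw [Finset.sum_add_distrib, Finset.sum_const, smul_eq_mul, mul_one] at hsumAc
  have hwgtsplit : (∑ t ∈ A, wgt μ t) + ∑ t ∈ Ac, wgt μ t = n := by
    rw [Finset.sum_filter_add_sum_filter_not, hwgtn]
  -- |A| ≥ k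
  have h1 : (∑ t ∈ A, (S ∩ KK μ t).card) = ∑ t ∈ A, wgt μ t := Finset.sum_congr rfl hAwgt
  have hAAc : A.card + Ac.card = n := by
    have hU : A ∪ Ac = Finset.range n := by
      ext t
      simp only [hAdef, hAcdef, Finset.mem_union, Finset.mem_filter]
      tauto
    have hD : Disjoint A Ac := by
      rw [Finset.disjoint_left]
      intro t h1 h2
      exact (Finset.mem_filter.1 h2).2 (Finset.mem_filter.1 h1).2
    rw [← Finset.card_union_of_disjoint hD, hU, Finset.card_range]
  have hAcard : k ≤ A.card := by omega
  -- reindex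
  set B := A.image (fun t => Equiv.swap 1 2 (t+1)) with hBdef
  have hinj : ∀ t ∈ A, ∀ t' ∈ A, Equiv.swap 1 2 (t+1) = Equiv.swap 1 2 (t'+1) → t = t' := by
    intro t _ t' _ h
    have := (Equiv.swap 1 2).injective h
    omega
  have hBcard : B.card = A.card := Finset.card_image_of_injOn hinj
  have hBsub : B ⊆ Finset.Icc 1 n := by
    intro i hi
    rw [hBdef, Finset.mem_image] at hi
    obtain ⟨t, ht, rfl⟩ := hi
    rw [hAdef, Finset.mem_filter, Finset.mem_range] at ht
    rw [Finset.mem_Icc, swap12_eq]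
    have := ht.1
    split_ifs <;> omega
  have hBsum : ∑ i ∈ B, colc μ i = ∑ t ∈ A, wgt μ t := by
    rw [hBdef, Finset.sum_image hinj]
    rfl
  have hdkB : dk n μ k ≤ ∑ t ∈ A, wgt μ t := by
    rw [← hBsum, dk_eq_sum_colc]
    exact monolemma μ k B hBsub (by omega)
  -- finish
  have hrle : r ≤ ∑ t ∈ Ac, (S ∩ KK μ t).card := by
    have hle2 : ∑ t ∈ Ac, ρ t ≤ ∑ t ∈ Ac, (S ∩ KK μ t).card :=
      Finset.sum_le_sum (fun t ht => (hcon t (Finset.mem_filter.1 ht).1).1)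
    omega
  have h1 : (∑ t ∈ A, (S ∩ KK μ t).card) = ∑ t ∈ A, wgt μ t := Finset.sum_congr rfl hAwgt
  omega

lemma tanisaki_le_JJ (μ : n.Partition) (hn2 : 2 ≤ n) : tanisaki n F μ ≤ JJ F μ := by
  rw [tanisaki, Ideal.span_le]
  rintro f ⟨k, r, S, hcard, hrk, hdk, rfl⟩
  exact suffix_mem μ hn2 n 0 (by omega) S (fun x _ => by simp [off]) r
    (Phi_zero μ hn2 hcard hrk hdk)

/-! ### The certificate pairing -/

section Target

variable (μ : n.Partition) (hmn : colc μ 2 + colc μ 1 ≤ n)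

noncomputable def dg1 : Fin n →₀ ℕ :=
  ∑ s : Fin (colc μ 1), Finsupp.single (em μ hmn s) (s.val - 1)

lemma dg1_em (s : Fin (colc μ 1)) : dg1 μ hmn (em μ hmn s) = s.val - 1 := by
  unfold dg1
  rw [Finset.sum_apply']
  rw [Finset.sum_eq_single s]
  · simp
  · intro u _ hus
    rw [Finsupp.single_apply, if_neg (fun h => hus (em_injective μ hmn h))]
  · simp

lemma dg1_outside {x : Fin n} (hx : x ∉ KK μ 1) : dg1 μ hmn x = 0 := by
  unfold dg1
  rw [Finset.sum_apply']
  apply Finset.sum_eq_zero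
  intro u _
  rw [Finsupp.single_apply, if_neg (fun h => hx ((mem_KK_one_iff μ hmn).2 ⟨u, h⟩))]

variable (hn1 : 1 ≤ n) (hm2 : 2 ≤ colc μ 2)

include hm2 in
lemma pairing_mul_esymmKK (j s : ℕ) (hs : 1 ≤ s) (q : MvPolynomial (Fin n) F) :
    pairing (q * esymmS F (KK μ j) s)
      (VV μ hmn F * (X (aaP μ hn1) - X (ccP μ hn1))) = 0 := by
  induction q using MvPolynomial.induction_on' with
  | monomial d a =>
    have hexp : monomial d a * esymmS F (KK μ j) s
        = ∑ T ∈ (KK μ j).powersetCard s, monomial (d + indi T) a := by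
      rw [esymmS, Finset.mul_sum]
      refine Finset.sum_congr rfl fun T _ => ?_
      rw [prod_X_eq, monomial_mul, mul_one]
    rw [hexp, pairing_sum_left, Finset.sum_congr rfl fun T _ => pairing_monomial _ _ _,
      ← Finset.mul_sum, kill μ hmn hn1 hm2 j d hs, mul_zero]
  | add f g hf hg => rw [add_mul, pairing_add_left, hf, hg, add_zero]

include hm2 in
lemma pairing_JJ {f : MvPolynomial (Fin n) F} (hf : f ∈ JJ F μ) :
    ∀ q, pairing (q * f) (VV μ hmn F * (X (aaP μ hn1) - X (ccP μ hn1))) = 0 := by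
  refine Submodule.span_induction
    (p := fun x _ => ∀ q, pairing (q * x)
      (VV μ hmn F * (X (aaP μ hn1) - X (ccP μ hn1))) = 0) ?_ ?_ ?_ ?_ hf
  · rintro x ⟨j, hjn, s, hs, rfl⟩ q
    exact pairing_mul_esymmKK μ hmn hn1 hm2 j s hs q
  · intro q
    rw [mul_zero, pairing_zero_left]
  · intro x y hx hy hpx hpy q
    rw [mul_add, pairing_add_left, hpx q, hpy q, add_zero]
  · intro a x hx hpx q
    show pairing (q * (a • x)) _ = 0
    rw [smul_eq_mul, ← mul_assoc]
    exact hpx (q * a)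

include hm2 in
lemma pairing_target (hl : 0 < colc μ 1) :
    pairing (monomial (dg1 μ hmn) 1
        * esymmS F ((Finset.univ.erase (em μ hmn ⟨0, hl⟩)).erase (aaP μ hn1)) (colc μ 1))
      (VV μ hmn F * (X (aaP μ hn1) - X (ccP μ hn1))) = -1 := by
  classical
  set A := aaP μ hn1 with hAdef
  set C := ccP μ hn1 with hCdef
  set b := em μ hmn ⟨0, hl⟩ with hbdef
  set Sset := (Finset.univ.erase b).erase A with hSdef
  have hexp : monomial (dg1 μ hmn) 1 * esymmS F Sset (colc μ 1)
      = ∑ T ∈ Sset.powersetCard (colc μ 1), monomial (dg1 μ hmn + indi T) 1 := by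
    rw [esymmS, Finset.mul_sum]
    refine Finset.sum_congr rfl fun T _ => ?_
    rw [prod_X_eq, monomial_mul, mul_one]
  rw [hexp, pairing_sum_left, Finset.sum_congr rfl fun T _ => pairing_monomial _ _ _]
  simp only [one_mul]
  have hco : ∀ e : Fin n →₀ ℕ, coeff e (VV μ hmn F * (X A - X C)) =
      (if A ∈ e.support then coeff (e - Finsupp.single A 1) (VV μ hmn F) else 0)
        - (if C ∈ e.support then coeff (e - Finsupp.single C 1) (VV μ hmn F) else 0) := by
    intro e
    rw [mul_sub, coeff_sub, coeff_mul_X', coeff_mul_X']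
  have hAK1 : A ∉ KK μ 1 := aa_not_KK1 μ hn1 hm2
  have hCK1 : C ∉ KK μ 1 := cc_not_KK1 μ hn1 hm2
  set Y := (KK μ 1).erase b with hYdef
  have hCY : C ∉ Y := fun h => hCK1 (Finset.erase_subset _ _ h)
  set T0 : Finset (Fin n) := insert C Y with hT0def
  have hoff2 : off μ 2 ≤ n := by
    rw [off_two μ]
    exact hmn
  have hcardKK1 : (KK μ 1).card = colc μ 1 := by
    rw [card_KK μ hoff2, wgt_one]
  have hbK1 : b ∈ KK μ 1 := em_mem_KK_one μ hmn _
  have hCnb : C ≠ b := fun h => hCK1 (h ▸ hbK1)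
  have hAnb : A ≠ b := fun h => hAK1 (h ▸ hbK1)
  have hAnC : A ≠ C := aa_ne_cc μ hn1 hm2
  have hT0mem : T0 ∈ Sset.powersetCard (colc μ 1) := by
    rw [Finset.mem_powersetCard]
    constructor
    · intro x hx
      rcases Finset.mem_insert.1 hx with rfl | hx'
      · exact Finset.mem_erase.2 ⟨Ne.symm hAnC, Finset.mem_erase.2 ⟨hCnb, Finset.mem_univ _⟩⟩
      · have hx1 := Finset.mem_erase.1 hx'
        refine Finset.mem_erase.2 ⟨fun h => hAK1 (h ▸ hx1.2), Finset.mem_erase.2 ⟨hx1.1, Finset.mem_univ _⟩⟩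
    · rw [Finset.card_insert_of_notMem hCY, hYdef, Finset.card_erase_of_mem hbK1, hcardKK1]
      omega
  have hterm : ∀ T ∈ Sset.powersetCard (colc μ 1),
      coeff (dg1 μ hmn + indi T) (VV μ hmn F * (X A - X C))
        = - (if C ∈ T then coeff (dg1 μ hmn + indi (T.erase C)) (VV μ hmn F) else 0) := by
    intro T hT
    rw [Finset.mem_powersetCard] at hT
    have hAT : A ∉ T := fun h => (Finset.mem_erase.1 (hT.1 h)).1 rfl
    have hbT : b ∉ T := fun h => (Finset.mem_erase.1 ((Finset.mem_erase.1 (hT.1 h)).2)).1 rfl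
    rw [hco]
    have hsuppA : A ∉ (dg1 μ hmn + indi T).support := by
      rw [Finsupp.mem_support_iff]
      simp [Finsupp.add_apply, indi_apply, hAT, dg1_outside μ hmn hAK1]
    rw [if_neg hsuppA, zero_sub]
    congr 1
    by_cases hCT : C ∈ T
    · rw [if_pos (by
        rw [Finsupp.mem_support_iff, Finsupp.add_apply, indi_apply, if_pos hCT]
        omega), if_pos hCT]
      have hTsplit : indi T = Finsupp.single C 1 + indi (T.erase C) := by
        rw [← indi_insert (Finset.notMem_erase C T), Finset.insert_erase hCT]
      rw [hTsplit]
      have hre : dg1 μ hmn + (Finsupp.single C 1 + indi (T.erase C)) - Finsupp.single C 1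
          = dg1 μ hmn + indi (T.erase C) := by
        ext y
        simp only [Finsupp.tsub_apply, Finsupp.add_apply]
        omega
      rw [hre]
    · rw [if_neg (by
        rw [Finsupp.mem_support_iff, Finsupp.add_apply, indi_apply, if_neg hCT,
          dg1_outside μ hmn hCK1]
        simp), if_neg hCT]
  rw [Finset.sum_congr rfl hterm, Finset.sum_neg_distrib, neg_eq_iff_eq_neg, neg_neg]
  rw [Finset.sum_eq_single T0]
  · rw [if_pos (Finset.mem_insert_self _ _)]
    have hT0erase : T0.erase C = Y := by
      rw [hT0def, Finset.erase_insert hCY]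
    rw [hT0erase]
    have hstair1 : dg1 μ hmn + indi Y = stair μ hmn 1 := by
      ext x
      by_cases hx : x ∈ KK μ 1
      · obtain ⟨w, rfl⟩ := (mem_KK_one_iff μ hmn).1 hx
        rw [Finsupp.add_apply, dg1_em, stair_em]
        have hYmem : em μ hmn w ∈ Y ↔ w ≠ ⟨0, hl⟩ := by
          rw [hYdef, Finset.mem_erase]
          constructor
          · intro h hw
            exact h.1 (by rw [hw, ← hbdef])
          · intro hw
            exact ⟨fun h => hw (em_injective μ hmn (h.trans hbdef)), em_mem_KK_one μ hmn w⟩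
        rw [indi_apply]
        by_cases hw : w = ⟨0, hl⟩
        · rw [if_neg (fun h => (hYmem.1 h) hw)]
          subst hw
          simp
        · rw [if_pos (hYmem.2 hw)]
          have hwval : w.val ≠ 0 := fun h => hw (Fin.ext h)
          simp only [Equiv.Perm.coe_one, id_eq]
          omega
      · rw [Finsupp.add_apply, dg1_outside μ hmn hx, indi_apply,
          if_neg (fun h => hx (Finset.erase_subset _ _ (hYdef ▸ h))),
          stair_outside μ hmn _ hx]
    rw [hstair1, coeff_VV_stair]
    simp
  · intro T hTmem hTne
    rw [Finset.mem_powersetCard] at hTmem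
    by_cases hCT : C ∈ T
    · rw [if_pos hCT]
      by_contra h0
      obtain ⟨σ, hσ⟩ := coeff_VV_ne μ hmn _ h0
      have hT'K1 : T.erase C ⊆ KK μ 1 := by
        intro x hxT'
        by_contra hxK
        have hval := congrArg (fun f => f x) hσ
        simp only [Finsupp.add_apply] at hval
        rw [stair_outside μ hmn _ hxK] at hval
        rw [dg1_outside μ hmn hxK, indi_apply, if_pos hxT'] at hval
        simp at hval
      have hT'Y : T.erase C ⊆ Y := by
        intro x hx
        refine Finset.mem_erase.2 ⟨?_, hT'K1 hx⟩
        intro hxb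
        have hxT := Finset.erase_subset _ _ hx
        have := (Finset.mem_erase.1 ((Finset.mem_erase.1 (hTmem.1 hxT)).2)).1
        exact this hxb
      have hcardT' : (T.erase C).card = colc μ 1 - 1 := by
        rw [Finset.card_erase_of_mem hCT, hTmem.2]
      have hcardY : Y.card = colc μ 1 - 1 := by
        rw [hYdef, Finset.card_erase_of_mem hbK1, hcardKK1]
      have hTY : T.erase C = Y :=
        Finset.eq_of_subset_of_card_le hT'Y (by omega)
      apply hTne
      rw [hT0def, ← hTY, Finset.insert_erase hCT]
    · rw [if_neg hCT]
  · intro h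
    exact absurd hT0mem h

end Target

lemma target_not_mem (μ : n.Partition) (hmn : colc μ 2 + colc μ 1 ≤ n) (hn1 : 1 ≤ n)
    (hm2 : 2 ≤ colc μ 2) (hl : 0 < colc μ 1) (hn2 : 2 ≤ n) :
    esymmS F ((Finset.univ.erase (em μ hmn ⟨0, hl⟩)).erase (aaP μ hn1)) (colc μ 1)
      ∉ tanisaki n F μ := by
  intro hmem
  have h1 := pairing_JJ μ hmn hn1 hm2 (tanisaki_le_JJ μ hn2 hmem) (monomial (dg1 μ hmn) 1)
  rw [pairing_target μ hmn hn1 hm2 hl] at h1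
  norm_num at h1

end Stmt16


/-- **Proposition 8.1.**  The Demazure operators `π_i` (characterized by
`(x_i - x_{i+1}) π_i f = x_i f - x_{i+1} s_i(f)`; `π̄_i = π_i - 1`) preserve the Tanisaki
ideal `I_μ` if and only if `μ` is a hook. -/
theorem stmt_16 (n : ℕ) (hn : 1 ≤ n) (F : Type*) [Field F] (μ : n.Partition)
    (dem : ℕ → MvPolynomial (Fin n) F → MvPolynomial (Fin n) F)
    (hdem : ∀ (i : ℕ) (hi : i + 1 < n) (f : MvPolynomial (Fin n) F),
      (X (⟨i, Nat.lt_of_succ_lt hi⟩ : Fin n) - X ⟨i + 1, hi⟩) * dem i f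
        = X (⟨i, Nat.lt_of_succ_lt hi⟩ : Fin n) * f - X ⟨i + 1, hi⟩ * rename (sw n i) f) :
    ((∀ i : ℕ, i + 1 < n → ∀ f ∈ tanisaki n F μ, dem i f - f ∈ tanisaki n F μ) ↔
      IsHook μ) ∧
    ((∀ i : ℕ, i + 1 < n → ∀ f ∈ tanisaki n F μ, dem i f ∈ tanisaki n F μ) ↔
      IsHook μ) := by
  have main : (∀ i : ℕ, i + 1 < n → ∀ f ∈ tanisaki n F μ, dem i f - f ∈ tanisaki n F μ)
      ↔ IsHook μ := by
    constructor
    · intro hpres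
      by_contra hhook
      have hm2 : 2 ≤ Stmt16.colc μ 2 := by
        unfold IsHook at hhook
        have hcolc : Stmt16.colc μ 2 = (μ.parts.filter fun p => 2 ≤ p).card := rfl
        omega
      have hml : Stmt16.colc μ 2 ≤ Stmt16.colc μ 1 := Stmt16.colc_anti μ (by omega)
      have hln : Stmt16.colc μ 1 ≤ n := Stmt16.colc_le_n μ
      have hn2 : 2 ≤ n := by omega
      have hmn : Stmt16.colc μ 2 + Stmt16.colc μ 1 ≤ n := by
        have h := Stmt16.off_mono μ hn2
        rw [Stmt16.off_two, Stmt16.off_n μ hn2] at h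
        exact h
      have hn1 : 1 ≤ n := by omega
      have hl : 0 < Stmt16.colc μ 1 := by omega
      have hi : (Stmt16.colc μ 2 - 1) + 1 < n := by omega
      set i := Stmt16.colc μ 2 - 1 with hidef
      set a : Fin n := (⟨i, Nat.lt_of_succ_lt hi⟩ : Fin n) with hadef
      set b : Fin n := (⟨i + 1, hi⟩ : Fin n) with hbdef
      have hab : a ≠ b := by
        intro h
        have := congrArg Fin.val h
        simp only [hadef, hbdef] at this
        omega
      have haS : a ∈ Finset.univ.erase b := Finset.mem_erase.2 ⟨hab, Finset.mem_univ _⟩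
      have hbS : b ∉ Finset.univ.erase b := Finset.notMem_erase _ _
      obtain ⟨ℓ', hℓ'⟩ : ∃ ℓ', Stmt16.colc μ 1 = ℓ' + 1 := ⟨Stmt16.colc μ 1 - 1, by omega⟩
      have hcard : (Finset.univ.erase b).card = n - 1 := by
        rw [Finset.card_erase_of_mem (Finset.mem_univ b), Finset.card_univ, Fintype.card_fin]
      have hdkn1 : dk n μ (n-1) = n - Stmt16.colc μ 1 := by
        have hIcc : Finset.Icc (n + 1 - (n-1)) n = Finset.Icc 2 n := by
          congr 1
          omega
        have hsplit : Finset.Icc 1 n = insert 1 (Finset.Icc 2 n) :=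
          Stmt16.Icc_bot_split (by omega) (by omega)
        have hsum := Stmt16.sum_colc μ
        rw [hsplit, Finset.sum_insert (by simp)] at hsum
        rw [Stmt16.dk_eq_sum_colc, hIcc]
        omega
      have hgen1 : esymmS F (Finset.univ.erase b) (Stmt16.colc μ 1) ∈ tanisaki n F μ :=
        Stmt16.gen_mem μ hcard (by omega) (by rw [hdkn1]; omega)
      have hD := hpres i hi _ hgen1
      rw [hℓ'] at hD
      rw [Stmt16.dem_esymm_a dem hdem hi haS hbS] at hD
      have hins : insert b ((Finset.univ.erase b).erase a) = Finset.univ.erase a := by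
        ext z
        simp only [Finset.mem_insert, Finset.mem_erase, Finset.mem_univ, and_true]
        constructor
        · rintro (rfl | ⟨hza, _⟩)
          · exact Ne.symm hab
          · exact hza
        · intro hza
          by_cases hzb : z = b
          · exact Or.inl hzb
          · exact Or.inr ⟨hza, hzb⟩
      rw [hins] at hD
      have hcard2 : (Finset.univ.erase a).card = n - 1 := by
        rw [Finset.card_erase_of_mem (Finset.mem_univ a), Finset.card_univ, Fintype.card_fin]
      have hgen2 : esymmS F (Finset.univ.erase a) (ℓ'+1) ∈ tanisaki n F μ := by
        rw [← hℓ']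
        exact Stmt16.gen_mem μ hcard2 (by omega) (by rw [hdkn1]; omega)
      have hW : esymmS F ((Finset.univ.erase b).erase a) (ℓ'+1) ∈ tanisaki n F μ := by
        have hsub := Ideal.sub_mem _ hgen2 hD
        simpa [sub_sub_cancel] using hsub
      have haP : a = Stmt16.aaP μ hn1 := by
        apply Fin.ext
        simp [hadef, Stmt16.aaP, hidef]
      have hbP : b = Stmt16.em μ hmn ⟨0, hl⟩ := by
        apply Fin.ext
        simp only [hbdef, Stmt16.em, hidef]
        omega
      rw [haP, hbP, ← hℓ'] at hW
      exact Stmt16.target_not_mem μ hmn hn1 hm2 hl hn2 hW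
    · intro hhook i hi f hf
      exact Stmt16.dem_sub_mem dem hdem hi hhook hf
  refine ⟨main, ?_, ?_⟩
  · intro hp
    apply main.1
    intro i hi f hf
    exact Ideal.sub_mem _ (hp i hi f hf) hf
  · intro hhook i hi f hf
    have h1 := main.2 hhook i hi f hf
    have h2 : dem i f = (dem i f - f) + f := by ring
    rw [h2]
    exact Ideal.add_mem _ h1 hf
end

section
/- Let F be a field and let μ = (1^{h−1}, n−h+1) be a hook partition of n with h parts (1 ≤ h ≤ n). Then the Tanisaki ideal I_μ ⊆ F[x_1,…,x_n] equals the ideal generated by the full elementary symmetric polynomials e_1,…,e_n in x_1,…,x_n together with all squarefree monomials x_{i_1}x_{i_2}⋯x_{i_h} with 1 ≤ i_1 < i_2 < ⋯ < i_h ≤ n. (Established in the proof of Proposition 8.1.) -/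
open MvPolynomial

lemma count_aux (n h : ℕ) (hh : 1 ≤ h) (hhn : h ≤ n) (i : ℕ) :
    (((n - h + 1) ::ₘ Multiset.replicate (h - 1) 1).filter (fun p => i ≤ p)).card
      = (if i ≤ n - h + 1 then 1 else 0) + (if i ≤ 1 then h - 1 else 0) := by
  rw [Multiset.filter_cons, Multiset.card_add]
  congr 1
  · split <;> simp
  · by_cases hi : i ≤ 1
    · rw [if_pos hi, Multiset.filter_eq_self.mpr, Multiset.card_replicate]
      intro a ha
      simp only [Multiset.eq_of_mem_replicate ha]; exact hi
    · rw [if_neg hi, Multiset.filter_eq_nil.mpr, Multiset.card_zero]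
      intro a ha
      simp only [Multiset.eq_of_mem_replicate ha]; omega

lemma dk_formula (n h : ℕ) (hn : 1 ≤ n) (hh : 1 ≤ h) (hhn : h ≤ n) (μ : n.Partition)
    (hμ : μ.parts = (n - h + 1) ::ₘ Multiset.replicate (h - 1) 1) (k : ℕ) (hk : k ≤ n) :
    dk n μ k = (n - h + 2) - (n + 1 - k) + (if n ≤ k then h - 1 else 0) := by
  unfold dk
  rw [hμ]
  have := fun i => count_aux n h hh hhn i
  simp only [this]
  rw [Finset.sum_add_distrib]
  congr 1
  · rw [← Finset.sum_filter]
    have hfe : (Finset.Icc (n + 1 - k) n).filter (fun i => i ≤ n - h + 1)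
        = Finset.Icc (n + 1 - k) (n - h + 1) := by
      ext i
      simp only [Finset.mem_filter, Finset.mem_Icc]
      omega
    rw [hfe]
    simp [Nat.card_Icc]
  · have : ∀ i ∈ Finset.Icc (n + 1 - k) n,
        (if i ≤ 1 then h - 1 else 0) = (if i = 1 then h - 1 else 0) := by
      intro i hi
      simp only [Finset.mem_Icc] at hi
      have : (i ≤ 1) ↔ (i = 1) := by omega
      simp [this]
    rw [Finset.sum_congr rfl this, Finset.sum_ite_eq']
    simp only [Finset.mem_Icc]
    rcases le_or_gt n k with hc | hc
    · rw [if_pos (by omega), if_pos hc]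
    · rw [if_neg (by omega), if_neg (by omega)]

/-- **From the proof of Proposition 8.1.**  For the hook `μ = (1^{h-1}, n-h+1)` with `h`
parts, the Tanisaki ideal `I_μ` equals the ideal generated by the elementary symmetric
polynomials `e_1, …, e_n` in all the variables together with all squarefree monomials
`x_{i_1} ⋯ x_{i_h}` of degree `h`. -/
theorem stmt_17 (n : ℕ) (hn : 1 ≤ n) (F : Type*) [Field F] (h : ℕ)
    (hh : 1 ≤ h) (hhn : h ≤ n) (μ : n.Partition)
    (hμ : μ.parts = (n - h + 1) ::ₘ Multiset.replicate (h - 1) 1) :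
    tanisaki n F μ = Ideal.span
      ({f : MvPolynomial (Fin n) F | ∃ r : ℕ, 1 ≤ r ∧ r ≤ n ∧
          f = esymmS F (Finset.univ : Finset (Fin n)) r} ∪
        {f : MvPolynomial (Fin n) F | ∃ T : Finset (Fin n),
          T.card = h ∧ f = ∏ x ∈ T, X x}) := by
  have hdk := dk_formula n h hn hh hhn μ hμ
  have hdkn : dk n μ n = n := by rw [hdk n le_rfl, if_pos le_rfl]; omega
  apply le_antisymm
  · rw [tanisaki, Ideal.span_le]
    rintro f ⟨k, r, S, hS, hrk, hlt, rfl⟩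
    have hkn : k ≤ n := by
      rw [← hS]; simpa using Finset.card_le_card (Finset.subset_univ S)
    by_cases hk : k = n
    · subst hk
      have hSu : S = Finset.univ := Finset.eq_univ_of_card S (by simpa using hS)
      subst hSu
      apply Ideal.subset_span
      left
      exact ⟨r, by omega, hrk, rfl⟩
    · have hklt : k < n := by omega
      have hhr : h ≤ r := by
        rw [hdk k hkn, if_neg (by omega)] at hlt
        omega
      rw [esymmS]
      apply Ideal.sum_mem
      intro T hT
      have hTcard : T.card = r := (Finset.mem_powersetCard.mp hT).2
      obtain ⟨T', hT'sub, hT'card⟩ := Finset.exists_subset_card_eq (by omega : h ≤ T.card)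
      rw [← Finset.prod_sdiff hT'sub]
      apply Ideal.mul_mem_left
      apply Ideal.subset_span
      right
      exact ⟨T', hT'card, rfl⟩
  · rw [Ideal.span_le]
    rintro f (⟨r, hr1, hrn, rfl⟩ | ⟨T, hT, rfl⟩)
    · apply Ideal.subset_span
      exact ⟨n, r, Finset.univ, by simp, hrn, by rw [hdkn]; omega, rfl⟩
    · apply Ideal.subset_span
      have : (∏ x ∈ T, X x : MvPolynomial (Fin n) F) = esymmS F T h := by
        rw [esymmS, ← hT, Finset.powersetCard_self, Finset.sum_singleton]
      refine ⟨h, h, T, hT, le_rfl, ?_, this⟩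
      rw [hdk h hhn]
      split <;> omega
end
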